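/- arXiv:2401.03409 — 2 statements merged into one kernel-verified Lean document; each statement's English description precedes it below -/
import Mathlib

section
/- Let L be the Grushin-Laplace operator on 𝔾^n_α and s ∈ (0,1). If p ∈ (1,∞) and β > 2s, then L^s maps B^{L,β}_{p,p}(𝔾^n_α) boundedly into L^p(𝔾^n_α), i.e. ‖L^s u‖_{L^p} ≲ ‖u‖_{B^{L,β}_{p,p}} for all u ∈ B^{L,β}_{p,p}(𝔾^n_α). For p = 1 the same boundedness holds whenever β ≥ 2s. -/
open MeasureTheory Real Set Filter
open scoped ENNReal NNReal

noncomputable section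

/-- The underlying space `ℝ^n = ℝ^m × ℝ^k` of the Grushin space `𝔾ⁿ_α`. -/
abbrev GPoint (m k : ℕ) : Type :=
  EuclideanSpace ℝ (Fin m) × EuclideanSpace ℝ (Fin k)

/-- The homogeneous dimension `Q = m + (α+1)k` of the Grushin space. -/
def homDim (m k : ℕ) (α : ℝ) : ℝ := m + (α + 1) * k

/-- An axiomatization of the Grushin space `𝔾ⁿ_α = (ℝ^m × ℝ^k, d_α)` together with the
heat kernel `K_t(g,g')` of the Grushin heat semigroup `e^{-tL}` generated by the
Grushin-Laplace operator `L = -Δ_x - |x|^{2α} Δ_y`, encoding the properties used in the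
paper: `d_α` is the Carnot–Carathéodory (pseudo)distance, the kernel is nonnegative,
symmetric, satisfies the semigroup (Chapman–Kolmogorov) property, is stochastically
complete, satisfies two-sided Gaussian bounds with respect to `d_α` and the volumes of
metric balls, and the ball volumes satisfy the two-sided doubling estimate
`(R/r)^n ≲ |B(g,R)|/|B(g,r)| ≲ (R/r)^Q`. -/
structure GrushinSetting (m k : ℕ) (α : ℝ) : Type where
  hm : 0 < m
  hk : 0 < k
  hα : 0 ≤ α
  /-- the Carnot–Carathéodory distance `d_α` -/
  d : GPoint m k → GPoint m k → ℝ
  d_nonneg : ∀ g g', 0 ≤ d g g'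
  d_symm : ∀ g g', d g g' = d g' g
  d_self : ∀ g, d g g = 0
  d_triangle : ∀ g₁ g₂ g₃, d g₁ g₃ ≤ d g₁ g₂ + d g₂ g₃
  d_meas : Measurable (Function.uncurry d)
  /-- the heat kernel of the Grushin semigroup `e^{-tL}` -/
  K : ℝ → GPoint m k → GPoint m k → ℝ
  K_nonneg : ∀ (t : ℝ) (g g' : GPoint m k), 0 < t → 0 ≤ K t g g'
  K_symm : ∀ (t : ℝ) (g g' : GPoint m k), K t g g' = K t g' g
  K_meas : ∀ t : ℝ, Measurable (Function.uncurry (K t))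
  K_semigroup : ∀ (t t' : ℝ) (g g' : GPoint m k), 0 < t → 0 < t' →
    (∫ g'', K t g g'' * K t' g'' g') = K (t + t') g g'
  K_stochastic : ∀ (t : ℝ) (g : GPoint m k), 0 < t → (∫ g', K t g g') = 1
  cl : ℝ
  cu : ℝ
  Cl : ℝ
  Cu : ℝ
  cb : ℝ
  Cb : ℝ
  cl_pos : 0 < cl
  cu_pos : 0 < cu
  Cl_pos : 0 < Cl
  Cu_pos : 0 < Cu
  cb_pos : 0 < cb
  Cb_pos : 0 < Cb
  ball_vol_pos : ∀ (g : GPoint m k) (r : ℝ), 0 < r → 0 < volume {g' | d g g' < r}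
  ball_vol_fin : ∀ (g : GPoint m k) (r : ℝ), volume {g' | d g g' < r} < ⊤
  /-- Gaussian upper bound for the heat kernel -/
  gauss_upper : ∀ (t : ℝ) (g g' : GPoint m k), 0 < t →
    K t g g' ≤ cu * Real.exp (-(Cu * (d g g') ^ 2) / t) /
      (volume {x | d g x < Real.sqrt t}).toReal
  /-- Gaussian lower bound for the heat kernel -/
  gauss_lower : ∀ (t : ℝ) (g g' : GPoint m k), 0 < t →
    cl * Real.exp (-(Cl * (d g g') ^ 2) / t) /
      (volume {x | d g x < Real.sqrt t}).toReal ≤ K t g g'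
  /-- volume ratio lower estimate `(R/r)^n ≲ |B(g,R)|/|B(g,r)|` -/
  ball_vol_ratio_lower : ∀ (g : GPoint m k) (r R : ℝ), 0 < r → r < R →
    cb * (R / r) ^ (m + k : ℕ) ≤
      (volume {x | d g x < R}).toReal / (volume {x | d g x < r}).toReal
  /-- volume ratio upper estimate `|B(g,R)|/|B(g,r)| ≲ (R/r)^Q` -/
  ball_vol_ratio_upper : ∀ (g : GPoint m k) (r R : ℝ), 0 < r → r < R →
    (volume {x | d g x < R}).toReal / (volume {x | d g x < r}).toReal ≤
      Cb * (R / r) ^ homDim m k α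

namespace GrushinSetting

variable {m k : ℕ} {α : ℝ}

/-- The Grushin heat semigroup `e^{-tL} u (g) = ∫ K_t(g,g') u(g') dg'`. -/
def heat (S : GrushinSetting m k α) (t : ℝ) (u : GPoint m k → ℝ) (g : GPoint m k) : ℝ :=
  ∫ g', S.K t g g' * u g'

/-- The fractional power `L^s` of the Grushin-Laplace operator, defined through
Balakrishnan's formula
`L^s u(g) = -(s/Γ(1-s)) ∫₀^∞ t^{-s-1} (e^{-tL}u(g) - u(g)) dt`. -/
def fracL (S : GrushinSetting m k α) (s : ℝ) (u : GPoint m k → ℝ) (g : GPoint m k) : ℝ :=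
  -(s / Real.Gamma (1 - s)) * ∫ t in Ioi (0 : ℝ), t ^ (-s - 1) * (S.heat t u g - u g)

/-- The quantity `∫_{𝔾ⁿ_α} e^{-tL}(|u - u(g)|^p)(g) dg` appearing in the Besov seminorms. -/
def besovInner (S : GrushinSetting m k α) (p t : ℝ) (u : GPoint m k → ℝ) : ℝ≥0∞ :=
  ∫⁻ g, ∫⁻ g', ENNReal.ofReal (S.K t g g' * |u g' - u g| ^ p)

/-- The heat-semigroup Besov seminorm
`N^{L,β}_{p,q}(u) = (∫₀^∞ (∫ e^{-tL}(|u-u(g)|^p)(g) dg)^{q/p} t^{-βq/2-1} dt)^{1/q}`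
for `q < ∞`. -/
def besovN (S : GrushinSetting m k α) (p q β : ℝ) (u : GPoint m k → ℝ) : ℝ≥0∞ :=
  (∫⁻ t in Ioi (0 : ℝ),
      (S.besovInner p t u) ^ (q / p) * ENNReal.ofReal (t ^ (-(β * q / 2) - 1))) ^ (1 / q)

/-- The heat-semigroup Besov seminorm
`N^{L,β}_{p,∞}(u) = sup_{t>0} t^{-β/2} (∫ e^{-tL}(|u-u(g)|^p)(g) dg)^{1/p}`. -/
def besovNInf (S : GrushinSetting m k α) (p β : ℝ) (u : GPoint m k → ℝ) : ℝ≥0∞ :=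
  ⨆ t : {t : ℝ // 0 < t},
    ENNReal.ofReal ((t : ℝ) ^ (-(β / 2))) * (S.besovInner p (t : ℝ) u) ^ (1 / p)

/-- Membership in the Besov space `B^{L,β}_{p,q}(𝔾ⁿ_α)`, `q < ∞`. -/
def MemBesov (S : GrushinSetting m k α) (p q β : ℝ) (u : GPoint m k → ℝ) : Prop :=
  MemLp u (ENNReal.ofReal p) volume ∧ S.besovN p q β u < ⊤

/-- Membership in the Besov space `B^{L,β}_{p,∞}(𝔾ⁿ_α)`. -/
def MemBesovInf (S : GrushinSetting m k α) (p β : ℝ) (u : GPoint m k → ℝ) : Prop :=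
  MemLp u (ENNReal.ofReal p) volume ∧ S.besovNInf p β u < ⊤

/-- The Besov norm `‖u‖_{L^p} + N^{L,β}_{p,q}(u)`, `q < ∞`. -/
def besovNorm (S : GrushinSetting m k α) (p q β : ℝ) (u : GPoint m k → ℝ) : ℝ≥0∞ :=
  eLpNorm u (ENNReal.ofReal p) volume + S.besovN p q β u

/-- The Besov norm `‖u‖_{L^p} + N^{L,β}_{p,∞}(u)`. -/
def besovNormInf (S : GrushinSetting m k α) (p β : ℝ) (u : GPoint m k → ℝ) : ℝ≥0∞ :=
  eLpNorm u (ENNReal.ofReal p) volume + S.besovNInf p β u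

/-- Membership in `𝔅^{L,β}_{p,q}(𝔾ⁿ_α)`, the closure of `C_c^∞(𝔾ⁿ_α)` in
`B^{L,β}_{p,q}(𝔾ⁿ_α)` with respect to the Besov norm, `q < ∞`. -/
def MemFrakB (S : GrushinSetting m k α) (p q β : ℝ) (u : GPoint m k → ℝ) : Prop :=
  ∃ v : ℕ → GPoint m k → ℝ,
    (∀ j, ContDiff ℝ (⊤ : ℕ∞) (v j) ∧ HasCompactSupport (v j)) ∧
    Tendsto (fun j => S.besovNorm p q β (fun g => v j g - u g)) atTop (nhds 0)

/-- Membership in `𝔅^{L,β}_{p,∞}(𝔾ⁿ_α)`, the closure of `C_c^∞(𝔾ⁿ_α)` in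
`B^{L,β}_{p,∞}(𝔾ⁿ_α)` with respect to the Besov norm. -/
def MemFrakBInf (S : GrushinSetting m k α) (p β : ℝ) (u : GPoint m k → ℝ) : Prop :=
  ∃ v : ℕ → GPoint m k → ℝ,
    (∀ j, ContDiff ℝ (⊤ : ℕ∞) (v j) ∧ HasCompactSupport (v j)) ∧
    Tendsto (fun j => S.besovNormInf p β (fun g => v j g - u g)) atTop (nhds 0)

end GrushinSetting

namespace GrushinSetting


variable {m k : ℕ} {α : ℝ}

/-- The scale factor for dyadic decomposition. -/
def Mc (S : GrushinSetting m k α) : ℝ := max 2 (S.Cl / S.Cu)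

lemma Mc_one_lt (S : GrushinSetting m k α) : 1 < S.Mc :=
  lt_of_lt_of_le one_lt_two (le_max_left _ _)

lemma Mc_pos (S : GrushinSetting m k α) : 0 < S.Mc := lt_trans one_pos S.Mc_one_lt

lemma Cl_le_Cu_Mc (S : GrushinSetting m k α) : S.Cl ≤ S.Cu * S.Mc := by
  have h := le_max_right 2 (S.Cl / S.Cu)
  have := S.Cu_pos
  rw [div_le_iff₀ this] at h
  calc S.Cl ≤ S.Mc * S.Cu := h
  _ = S.Cu * S.Mc := mul_comm _ _

/-- The comparison constant. -/
def C0 (S : GrushinSetting m k α) : ℝ :=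
  S.cu / S.cl * (S.Cb * (S.Mc ^ ((3:ℝ)/2)) ^ homDim m k α)

lemma homDim_pos (S : GrushinSetting m k α) : 0 < homDim m k α := by
  have h1 : (0:ℝ) < m := by exact_mod_cast S.hm
  have h2 : (0:ℝ) < k := by exact_mod_cast S.hk
  have := S.hα
  unfold homDim
  nlinarith

lemma C0_pos (S : GrushinSetting m k α) : 0 < S.C0 := by
  have h1 := S.cu_pos; have h2 := S.cl_pos; have h3 := S.Cb_pos
  have h4 : (0:ℝ) < (S.Mc ^ ((3:ℝ)/2)) ^ homDim m k α := by
    apply Real.rpow_pos_of_pos; exact Real.rpow_pos_of_pos S.Mc_pos _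
  unfold C0; positivity

lemma ball_toReal_pos (S : GrushinSetting m k α) (g : GPoint m k) {r : ℝ} (hr : 0 < r) :
    0 < (volume {x | S.d g x < r}).toReal :=
  ENNReal.toReal_pos (S.ball_vol_pos g r hr).ne' (S.ball_vol_fin g r).ne

lemma ball_toReal_mono (S : GrushinSetting m k α) (g : GPoint m k) {r r' : ℝ} (h : r ≤ r') :
    (volume {x | S.d g x < r}).toReal ≤ (volume {x | S.d g x < r'}).toReal := by
  apply ENNReal.toReal_mono (S.ball_vol_fin g r').ne
  exact measure_mono (fun x hx => lt_of_lt_of_le hx h)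

/-- Key kernel comparison: if `t ∈ (a, Mc·a]` and `t' ∈ (Mc²·a, Mc³·a]` then
`K t ≤ C0 · K t'`. -/
lemma kernel_compare (S : GrushinSetting m k α) {a t t' : ℝ} (ha : 0 < a)
    (ht1 : a < t) (ht2 : t ≤ S.Mc * a) (ht1' : S.Mc ^ (2:ℕ) * a < t')
    (ht2' : t' ≤ S.Mc ^ (3:ℕ) * a) (g g' : GPoint m k) :
    S.K t g g' ≤ S.C0 * S.K t' g g' := by
  have hM1 := S.Mc_one_lt
  have hM0 := S.Mc_pos
  have ht0 : 0 < t := ha.trans ht1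
  have ht'0 : 0 < t' := lt_trans (by positivity) ht1'
  set D := S.d g g' with hD
  have hD0 : 0 ≤ D := S.d_nonneg g g'
  set va := (volume {x | S.d g x < Real.sqrt a}).toReal with hva_def
  set vt := (volume {x | S.d g x < Real.sqrt t}).toReal with hvt_def
  set vt' := (volume {x | S.d g x < Real.sqrt t'}).toReal with hvt'_def
  have hva : 0 < va := S.ball_toReal_pos g (Real.sqrt_pos.2 ha)
  have hvt : 0 < vt := S.ball_toReal_pos g (Real.sqrt_pos.2 ht0)
  have hvt' : 0 < vt' := S.ball_toReal_pos g (Real.sqrt_pos.2 ht'0)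
  have hvavt : va ≤ vt := S.ball_toReal_mono g (Real.sqrt_le_sqrt ht1.le)
  -- the big radius
  have hsqrt3 : Real.sqrt (S.Mc ^ (3:ℕ) * a) = S.Mc ^ ((3:ℝ)/2) * Real.sqrt a := by
    rw [Real.sqrt_mul (by positivity), Real.sqrt_eq_rpow, ← Real.rpow_natCast S.Mc 3,
      ← Real.rpow_mul hM0.le]
    norm_num
  have hMc32 : 1 < S.Mc ^ ((3:ℝ)/2) := Real.one_lt_rpow_iff_of_pos hM0 |>.2 (Or.inl ⟨hM1, by norm_num⟩)
  have hratio : vt' / va ≤ S.Cb * (S.Mc ^ ((3:ℝ)/2)) ^ homDim m k α := by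
    have h2 : vt' ≤ (volume {x | S.d g x < S.Mc ^ ((3:ℝ)/2) * Real.sqrt a}).toReal := by
      rw [← hsqrt3]
      exact S.ball_toReal_mono g (Real.sqrt_le_sqrt ht2')
    have h3 := S.ball_vol_ratio_upper g (Real.sqrt a) (S.Mc ^ ((3:ℝ)/2) * Real.sqrt a)
      (Real.sqrt_pos.2 ha) (by nlinarith [Real.sqrt_pos.2 ha])
    have h4 : S.Mc ^ ((3:ℝ)/2) * Real.sqrt a / Real.sqrt a = S.Mc ^ ((3:ℝ)/2) := by
      field_simp
    rw [h4] at h3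
    calc vt' / va ≤ (volume {x | S.d g x < S.Mc ^ ((3:ℝ)/2) * Real.sqrt a}).toReal / va := by
          gcongr
    _ ≤ S.Cb * (S.Mc ^ ((3:ℝ)/2)) ^ homDim m k α := h3
  -- exponential comparison
  have hexp : Real.exp (-(S.Cu * D ^ 2) / t) ≤ Real.exp (-(S.Cl * D ^ 2) / t') := by
    apply Real.exp_le_exp.2
    rw [neg_div, neg_div, neg_le_neg_iff]
    have key : S.Cl / t' ≤ S.Cu / t := by
      have hCu := S.Cu_pos
      have hCl := S.Cl_pos
      have h1 : S.Cl / t' ≤ S.Cl / (S.Mc ^ (2:ℕ) * a) := by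
        apply div_le_div_of_nonneg_left hCl.le (by positivity) ht1'.le
      have h2 : S.Cu / (S.Mc * a) ≤ S.Cu / t := by
        apply div_le_div_of_nonneg_left hCu.le ht0 ht2
      refine h1.trans (le_trans ?_ h2)
      rw [div_le_div_iff₀ (by positivity) (by positivity)]
      have := S.Cl_le_Cu_Mc
      have : S.Cl * (S.Mc * a) ≤ S.Cu * S.Mc * (S.Mc * a) := by nlinarith
      calc S.Cl * (S.Mc * a) ≤ S.Cu * S.Mc * (S.Mc * a) := this
      _ = S.Cu * (S.Mc ^ (2:ℕ) * a) := by ring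
    calc S.Cl * D ^ 2 / t' = S.Cl / t' * D ^ 2 := by ring
    _ ≤ S.Cu / t * D ^ 2 := by nlinarith
    _ = S.Cu * D ^ 2 / t := by ring
  have hu := S.gauss_upper t g g' ht0
  have hl := S.gauss_lower t' g g' ht'0
  have hKt' : 0 ≤ S.K t' g g' := S.K_nonneg t' g g' ht'0
  have hexp' : Real.exp (-(S.Cl * D ^ 2) / t') ≤ S.K t' g g' * vt' / S.cl := by
    rw [le_div_iff₀ S.cl_pos, mul_comm]
    calc S.cl * Real.exp (-(S.Cl * D ^ 2) / t')
        = S.cl * Real.exp (-(S.Cl * D ^ 2) / t') / vt' * vt' := by field_simp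
    _ ≤ S.K t' g g' * vt' := by
        apply mul_le_mul_of_nonneg_right _ hvt'.le
        exact hl
  have hcu := S.cu_pos
  have hcl := S.cl_pos
  calc S.K t g g' ≤ S.cu * Real.exp (-(S.Cu * D ^ 2) / t) / vt := hu
  _ ≤ S.cu * Real.exp (-(S.Cl * D ^ 2) / t') / va := by
      gcongr
  _ ≤ S.cu * (S.K t' g g' * vt' / S.cl) / va := by gcongr
  _ = S.cu / S.cl * (vt' / va) * S.K t' g g' := by field_simp
  _ ≤ S.cu / S.cl * (S.Cb * (S.Mc ^ ((3:ℝ)/2)) ^ homDim m k α) * S.K t' g g' := by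
      gcongr
  _ = S.C0 * S.K t' g g' := by rw [C0]

end GrushinSetting
namespace GrushinSetting

variable {m k : ℕ} {α : ℝ}

/-- pointwise Besov integrand -/
def HpF (S : GrushinSetting m k α) (p : ℝ) (u : GPoint m k → ℝ) (t : ℝ) (g : GPoint m k) :
    ℝ≥0∞ :=
  ∫⁻ g', ENNReal.ofReal (S.K t g g' * |u g' - u g| ^ p)

lemma besovInner_eq_HpF (S : GrushinSetting m k α) (p t : ℝ) (u : GPoint m k → ℝ) :
    S.besovInner p t u = ∫⁻ g, S.HpF p u t g := rfl

lemma K_meas_right (S : GrushinSetting m k α) (t : ℝ) (g : GPoint m k) :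
    Measurable (fun g' => S.K t g g') :=
  (S.K_meas t).comp measurable_prodMk_left

lemma K_meas_left (S : GrushinSetting m k α) (t : ℝ) (g' : GPoint m k) :
    Measurable (fun g => S.K t g g') :=
  (S.K_meas t).comp measurable_prodMk_right

lemma integrand_meas (S : GrushinSetting m k α) (p t : ℝ) {u : GPoint m k → ℝ}
    (hu : Measurable u) :
    Measurable (fun x : GPoint m k × GPoint m k =>
      ENNReal.ofReal (S.K t x.1 x.2 * |u x.2 - u x.1| ^ p)) := by
  have h2 : Measurable (fun x : GPoint m k × GPoint m k => |u x.2 - u x.1| ^ p) := by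
    fun_prop
  exact ENNReal.measurable_ofReal.comp ((S.K_meas t).mul h2)

lemma integrand_meas_right (S : GrushinSetting m k α) (p t : ℝ) {u : GPoint m k → ℝ}
    (hu : Measurable u) (g : GPoint m k) :
    Measurable (fun g' => ENNReal.ofReal (S.K t g g' * |u g' - u g| ^ p)) :=
  (S.integrand_meas p t hu).comp measurable_prodMk_left

lemma HpF_meas (S : GrushinSetting m k α) (p : ℝ) {u : GPoint m k → ℝ}
    (hu : Measurable u) (t : ℝ) : Measurable (fun g => S.HpF p u t g) :=
  Measurable.lintegral_prod_right (f := fun g g' =>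
    ENNReal.ofReal (S.K t g g' * |u g' - u g| ^ p)) (S.integrand_meas p t hu)

lemma K_integrable (S : GrushinSetting m k α) {t : ℝ} (ht : 0 < t) (g : GPoint m k) :
    Integrable (fun g' => S.K t g g') volume := by
  by_contra h
  have h0 := integral_undef h
  rw [S.K_stochastic t g ht] at h0
  exact one_ne_zero h0

lemma K_lintegral_one (S : GrushinSetting m k α) {t : ℝ} (ht : 0 < t) (g : GPoint m k) :
    ∫⁻ g', ENNReal.ofReal (S.K t g g') = 1 := by
  rw [← ofReal_integral_eq_lintegral_ofReal (S.K_integrable ht g)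
    (Filter.Eventually.of_forall fun g' => S.K_nonneg t g g' ht)]
  rw [S.K_stochastic t g ht, ENNReal.ofReal_one]

lemma K_lintegral_one' (S : GrushinSetting m k α) {t : ℝ} (ht : 0 < t) (g' : GPoint m k) :
    ∫⁻ g, ENNReal.ofReal (S.K t g g') = 1 := by
  simp_rw [fun g => S.K_symm t g g']
  exact S.K_lintegral_one ht g'

lemma HpF_compare (S : GrushinSetting m k α) {p : ℝ} (hp : 0 ≤ p) {u : GPoint m k → ℝ}
    (hu : Measurable u) {a t t' : ℝ} (ha : 0 < a)
    (ht1 : a < t) (ht2 : t ≤ S.Mc * a) (ht1' : S.Mc ^ (2:ℕ) * a < t')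
    (ht2' : t' ≤ S.Mc ^ (3:ℕ) * a) (g : GPoint m k) :
    S.HpF p u t g ≤ ENNReal.ofReal S.C0 * S.HpF p u t' g := by
  rw [HpF, HpF, ← lintegral_const_mul'' _ ((S.integrand_meas_right p t' hu g).aemeasurable)]
  apply lintegral_mono fun g' => ?_
  rw [← ENNReal.ofReal_mul S.C0_pos.le, ← mul_assoc]
  apply ENNReal.ofReal_le_ofReal
  apply mul_le_mul_of_nonneg_right (S.kernel_compare ha ht1 ht2 ht1' ht2' g g')
  positivity

lemma besovInner_compare (S : GrushinSetting m k α) {p : ℝ} (hp : 0 ≤ p)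
    {u : GPoint m k → ℝ} (hu : Measurable u) {a t t' : ℝ} (ha : 0 < a)
    (ht1 : a < t) (ht2 : t ≤ S.Mc * a) (ht1' : S.Mc ^ (2:ℕ) * a < t')
    (ht2' : t' ≤ S.Mc ^ (3:ℕ) * a) :
    S.besovInner p t u ≤ ENNReal.ofReal S.C0 * S.besovInner p t' u := by
  rw [besovInner_eq_HpF, besovInner_eq_HpF,
    ← lintegral_const_mul'' _ (S.HpF_meas p hu t').aemeasurable]
  exact lintegral_mono fun g => S.HpF_compare hp hu ha ht1 ht2 ht1' ht2' g

/-- elementary: `|x - y|^p ≤ 2^p (|x|^p + |y|^p)` -/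
lemma abs_sub_rpow_le (x y p : ℝ) (hp : 0 ≤ p) :
    |x - y| ^ p ≤ 2 ^ p * (|x| ^ p + |y| ^ p) := by
  have h1 : |x - y| ≤ 2 * max |x| |y| := by
    calc |x - y| ≤ |x| + |y| := abs_sub x y
    _ ≤ max |x| |y| + max |x| |y| := by
        gcongr
        exacts [le_max_left _ _, le_max_right _ _]
    _ = 2 * max |x| |y| := by ring
  calc |x - y| ^ p ≤ (2 * max |x| |y|) ^ p :=
        Real.rpow_le_rpow (abs_nonneg _) h1 hp
  _ = 2 ^ p * (max |x| |y|) ^ p := Real.mul_rpow (by norm_num) (le_max_iff.2 (Or.inl (abs_nonneg _)))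
  _ ≤ 2 ^ p * (|x| ^ p + |y| ^ p) := by
      gcongr
      rcases max_cases |x| |y| with ⟨h, _⟩ | ⟨h, _⟩ <;> rw [h]
      · exact le_add_of_nonneg_right (Real.rpow_nonneg (abs_nonneg _) _)
      · exact le_add_of_nonneg_left (Real.rpow_nonneg (abs_nonneg _) _)

/-- `∫ e^{-tL}(|u-u(g)|^p)(g) dg ≤ 2^{p+1} ∫|u|^p`. -/
lemma besovInner_le_norm (S : GrushinSetting m k α) {p : ℝ} (hp : 0 ≤ p) {t : ℝ} (ht : 0 < t)
    {u : GPoint m k → ℝ} (hu : Measurable u) :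
    S.besovInner p t u ≤
      ENNReal.ofReal (2 ^ p) * (2 * ∫⁻ g, ENNReal.ofReal (|u g| ^ p)) := by
  have hA : Measurable fun g : GPoint m k => ENNReal.ofReal (|u g| ^ p) := by
    fun_prop
  have key : ∀ g g' : GPoint m k,
      ENNReal.ofReal (S.K t g g' * |u g' - u g| ^ p) ≤
        ENNReal.ofReal (2 ^ p) * (ENNReal.ofReal (|u g'| ^ p) * ENNReal.ofReal (S.K t g g')
          + ENNReal.ofReal (S.K t g g') * ENNReal.ofReal (|u g| ^ p)) := by
    intro g g'
    have hK := S.K_nonneg t g g' ht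
    have h1 : S.K t g g' * |u g' - u g| ^ p ≤
        2 ^ p * (|u g'| ^ p * S.K t g g' + S.K t g g' * |u g| ^ p) := by
      have := abs_sub_rpow_le (u g') (u g) p hp
      nlinarith [Real.rpow_nonneg (abs_nonneg (u g')) p, Real.rpow_nonneg (abs_nonneg (u g)) p,
        Real.rpow_nonneg (abs_nonneg (u g' - u g)) p]
    calc ENNReal.ofReal (S.K t g g' * |u g' - u g| ^ p)
        ≤ ENNReal.ofReal (2 ^ p * (|u g'| ^ p * S.K t g g' + S.K t g g' * |u g| ^ p)) :=
          ENNReal.ofReal_le_ofReal h1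
    _ = ENNReal.ofReal (2 ^ p) * (ENNReal.ofReal (|u g'| ^ p) * ENNReal.ofReal (S.K t g g')
          + ENNReal.ofReal (S.K t g g') * ENNReal.ofReal (|u g| ^ p)) := by
        rw [ENNReal.ofReal_mul (by positivity), ENNReal.ofReal_add (by positivity) (by positivity),
          ENNReal.ofReal_mul (by positivity), ENNReal.ofReal_mul hK]
  have hK2 : Measurable fun x : GPoint m k × GPoint m k => ENNReal.ofReal (S.K t x.1 x.2) :=
    ENNReal.measurable_ofReal.comp (S.K_meas t)
  have hKg : ∀ g, Measurable fun g' => ENNReal.ofReal (S.K t g g') := fun g =>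
    ENNReal.measurable_ofReal.comp (S.K_meas_right t g)
  have hKg' : ∀ g', Measurable fun g => ENNReal.ofReal (S.K t g g') := fun g' =>
    ENNReal.measurable_ofReal.comp (S.K_meas_left t g')
  have hA2 : Measurable fun x : GPoint m k × GPoint m k => ENNReal.ofReal (|u x.2| ^ p) :=
    hA.comp measurable_snd
  have hA1 : Measurable fun x : GPoint m k × GPoint m k => ENNReal.ofReal (|u x.1| ^ p) :=
    hA.comp measurable_fst
  set Up := ∫⁻ g, ENNReal.ofReal (|u g| ^ p) with hUp
  have hT1 : (∫⁻ g, ∫⁻ g', ENNReal.ofReal (|u g'| ^ p) * ENNReal.ofReal (S.K t g g')) = Up := by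
    rw [lintegral_lintegral_swap (hA2.mul hK2).aemeasurable]
    calc ∫⁻ g', ∫⁻ g, ENNReal.ofReal (|u g'| ^ p) * ENNReal.ofReal (S.K t g g')
        = ∫⁻ g', ENNReal.ofReal (|u g'| ^ p) := by
          apply lintegral_congr fun g' => ?_
          rw [lintegral_const_mul'' _
            ((hKg' g').aemeasurable),
            S.K_lintegral_one' ht g', mul_one]
    _ = Up := rfl
  have hT2 : (∫⁻ g, ∫⁻ g', ENNReal.ofReal (S.K t g g') * ENNReal.ofReal (|u g| ^ p)) = Up := by
    apply lintegral_congr fun g => ?_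
    rw [lintegral_mul_const'' _
      ((hKg g).aemeasurable),
      S.K_lintegral_one ht g, one_mul]
  have hsplit : (∫⁻ g, ∫⁻ g',
      (ENNReal.ofReal (|u g'| ^ p) * ENNReal.ofReal (S.K t g g')
        + ENNReal.ofReal (S.K t g g') * ENNReal.ofReal (|u g| ^ p))) =
      (∫⁻ g, ∫⁻ g', ENNReal.ofReal (|u g'| ^ p) * ENNReal.ofReal (S.K t g g'))
      + ∫⁻ g, ∫⁻ g', ENNReal.ofReal (S.K t g g') * ENNReal.ofReal (|u g| ^ p) := by
    have step1 : ∀ g : GPoint m k, (∫⁻ g',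
        (ENNReal.ofReal (|u g'| ^ p) * ENNReal.ofReal (S.K t g g')
          + ENNReal.ofReal (S.K t g g') * ENNReal.ofReal (|u g| ^ p))) =
        (∫⁻ g', ENNReal.ofReal (|u g'| ^ p) * ENNReal.ofReal (S.K t g g'))
        + ∫⁻ g', ENNReal.ofReal (S.K t g g') * ENNReal.ofReal (|u g| ^ p) := by
      intro g
      exact lintegral_add_left' ((hA.mul (hKg g)).aemeasurable) _
    rw [lintegral_congr step1]
    exact lintegral_add_left'
      ((hA2.mul hK2).lintegral_prod_right'.aemeasurable) _
  calc S.besovInner p t u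
      ≤ ∫⁻ g, ∫⁻ g', ENNReal.ofReal (2 ^ p) *
          (ENNReal.ofReal (|u g'| ^ p) * ENNReal.ofReal (S.K t g g')
            + ENNReal.ofReal (S.K t g g') * ENNReal.ofReal (|u g| ^ p)) :=
        lintegral_mono fun g => lintegral_mono fun g' => key g g'
  _ = ENNReal.ofReal (2 ^ p) * ∫⁻ g, ∫⁻ g',
          (ENNReal.ofReal (|u g'| ^ p) * ENNReal.ofReal (S.K t g g')
            + ENNReal.ofReal (S.K t g g') * ENNReal.ofReal (|u g| ^ p)) := by
      rw [← lintegral_const_mul'' _ (f := fun g => ∫⁻ g', (ENNReal.ofReal (|u g'| ^ p) * ENNReal.ofReal (S.K t g g')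
              + ENNReal.ofReal (S.K t g g') * ENNReal.ofReal (|u g| ^ p))) (((hA2.mul hK2).add
        (hK2.mul hA1)).lintegral_prod_right'.aemeasurable)]
      apply lintegral_congr fun g => ?_
      exact lintegral_const_mul'' _ (((hA.mul (hKg g)).add
        ((hKg g).mul measurable_const)).aemeasurable)
  _ = ENNReal.ofReal (2 ^ p) * (Up + Up) := by rw [hsplit, hT1, hT2]
  _ ≤ ENNReal.ofReal (2 ^ p) * (2 * Up) := by rw [two_mul]

end GrushinSetting
namespace GrushinSetting

variable {m k : ℕ} {α : ℝ}

lemma heat_sub_le_one (S : GrushinSetting m k α) {t : ℝ} (ht : 0 < t)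
    {u : GPoint m k → ℝ} (hu : Measurable u) (g : GPoint m k) :
    ENNReal.ofReal |S.heat t u g - u g| ≤
      ∫⁻ g', ENNReal.ofReal (S.K t g g') * ENNReal.ofReal |u g' - u g| := by
  have hKnn : ∀ g', 0 ≤ S.K t g g' := fun g' => S.K_nonneg t g g' ht
  have hptwise : ∀ g', (‖S.K t g g' * (u g' - u g)‖₊ : ℝ≥0∞) =
      ENNReal.ofReal (S.K t g g') * ENNReal.ofReal |u g' - u g| := by
    intro g'
    rw [← enorm_eq_nnnorm, Real.enorm_eq_ofReal_abs, abs_mul, abs_of_nonneg (hKnn g'),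
      ENNReal.ofReal_mul (hKnn g')]
  by_cases hInt : Integrable (fun g' => S.K t g g' * u g') volume
  · have hconst : Integrable (fun g' => S.K t g g' * u g) volume :=
      (S.K_integrable ht g).mul_const _
    have heq : S.heat t u g - u g = ∫ g', S.K t g g' * (u g' - u g) := by
      have hfun : (fun g' => S.K t g g' * (u g' - u g)) =
          fun g' => S.K t g g' * u g' - S.K t g g' * u g := by funext g'; ring
      rw [hfun, integral_sub hInt hconst]
      have : (∫ g', S.K t g g' * u g) = u g := by
        rw [integral_mul_const, S.K_stochastic t g ht, one_mul]
      rw [this, heat]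
    rw [heq, ← Real.enorm_eq_ofReal_abs]
    calc (‖∫ g', S.K t g g' * (u g' - u g)‖₊ : ℝ≥0∞)
        ≤ ∫⁻ g', (‖S.K t g g' * (u g' - u g)‖₊ : ℝ≥0∞) :=
          enorm_integral_le_lintegral_enorm _
    _ = _ := lintegral_congr hptwise
  · have h0 : S.heat t u g = 0 := integral_undef hInt
    have hmeas : AEStronglyMeasurable (fun g' => S.K t g g' * u g') volume :=
      ((S.K_meas_right t g).mul hu).aestronglyMeasurable
    have htop : (∫⁻ g', (‖S.K t g g' * u g'‖₊ : ℝ≥0∞)) = ⊤ := by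
      by_contra hne
      exact hInt ⟨hmeas, lt_top_iff_ne_top.2 hne⟩
    have hbound : (∫⁻ g', (‖S.K t g g' * u g'‖₊ : ℝ≥0∞)) ≤
        (∫⁻ g', ENNReal.ofReal (S.K t g g') * ENNReal.ofReal |u g' - u g|)
          + ENNReal.ofReal |u g| := by
      have hm1 : Measurable fun g' => ENNReal.ofReal (S.K t g g') *
          ENNReal.ofReal |u g' - u g| := by
        refine Measurable.mul (f := fun g' => ENNReal.ofReal (S.K t g g')) (g := fun g' => ENNReal.ofReal |u g' - u g|) ?_ ?_
        · exact ENNReal.measurable_ofReal.comp (S.K_meas_right t g)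
        · exact ENNReal.measurable_ofReal.comp (hu.sub measurable_const).abs
      calc (∫⁻ g', (‖S.K t g g' * u g'‖₊ : ℝ≥0∞))
          ≤ ∫⁻ g', (ENNReal.ofReal (S.K t g g') * ENNReal.ofReal |u g' - u g|
              + ENNReal.ofReal (S.K t g g') * ENNReal.ofReal |u g|) := by
            apply lintegral_mono fun g' => ?_
            rw [← enorm_eq_nnnorm, Real.enorm_eq_ofReal_abs, abs_mul, abs_of_nonneg (hKnn g'),
              ENNReal.ofReal_mul (hKnn g'), ← mul_add]
            apply mul_le_mul_right
            rw [← ENNReal.ofReal_add (abs_nonneg _) (abs_nonneg _)]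
            apply ENNReal.ofReal_le_ofReal
            calc |u g'| = |(u g' - u g) + u g| := by ring_nf
            _ ≤ |u g' - u g| + |u g| := abs_add_le _ _
      _ = (∫⁻ g', ENNReal.ofReal (S.K t g g') * ENNReal.ofReal |u g' - u g|)
            + ∫⁻ g', ENNReal.ofReal (S.K t g g') * ENNReal.ofReal |u g| := by
          exact lintegral_add_left' hm1.aemeasurable _
      _ = (∫⁻ g', ENNReal.ofReal (S.K t g g') * ENNReal.ofReal |u g' - u g|)
            + ENNReal.ofReal |u g| := by
          congr 1
          have hmK : Measurable fun g' => ENNReal.ofReal (S.K t g g') :=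
            ENNReal.measurable_ofReal.comp (S.K_meas_right t g)
          rw [lintegral_mul_const'' _ hmK.aemeasurable, S.K_lintegral_one ht g, one_mul]
    have hRtop : (∫⁻ g', ENNReal.ofReal (S.K t g g') * ENNReal.ofReal |u g' - u g|) = ⊤ := by
      by_contra hne
      have hlt : (∫⁻ g', (‖S.K t g g' * u g'‖₊ : ℝ≥0∞)) < ⊤ :=
        lt_of_le_of_lt hbound (ENNReal.add_lt_top.2
          ⟨lt_top_iff_ne_top.2 hne, ENNReal.ofReal_lt_top⟩)
      rw [htop] at hlt
      exact lt_irrefl ⊤ hlt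
    rw [hRtop]
    exact le_top

lemma jensen_aux (S : GrushinSetting m k α) {p : ℝ} (hp : 1 ≤ p) {t : ℝ} (ht : 0 < t)
    {u : GPoint m k → ℝ} (hu : Measurable u) (g : GPoint m k) :
    (∫⁻ g', ENNReal.ofReal (S.K t g g') * ENNReal.ofReal |u g' - u g|) ≤
      (∫⁻ g', ENNReal.ofReal (S.K t g g') * ENNReal.ofReal |u g' - u g| ^ p) ^ (1/p) := by
  have hκ : Measurable fun g' => ENNReal.ofReal (S.K t g g') :=
    ENNReal.measurable_ofReal.comp (S.K_meas_right t g)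
  have hω : Measurable fun g' => ENNReal.ofReal |u g' - u g| :=
    ENNReal.measurable_ofReal.comp (hu.sub measurable_const).abs
  rcases eq_or_lt_of_le hp with hp1 | hp1
  · rw [← hp1]
    simp [ENNReal.rpow_one]
  · have hpq := Real.HolderConjugate.conjExponent hp1
    set q := Real.conjExponent p with hq
    have hp0 : p ≠ 0 := by positivity
    have hq0 : 0 < q := hpq.symm.pos
    have hid : ∀ g', ENNReal.ofReal (S.K t g g') * ENNReal.ofReal |u g' - u g| =
        ((fun x => ENNReal.ofReal (S.K t g x) ^ (1/p) * ENNReal.ofReal |u x - u g|) *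
          (fun x => ENNReal.ofReal (S.K t g x) ^ (1/q))) g' := by
      intro g'
      simp only [Pi.mul_apply]
      rcases eq_or_ne (ENNReal.ofReal (S.K t g g')) 0 with h0 | h0
      · rw [h0, ENNReal.zero_rpow_of_pos (by positivity : (0:ℝ) < 1/p),
          ENNReal.zero_rpow_of_pos (by positivity : (0:ℝ) < 1/q)]
        simp
      · rw [mul_comm (ENNReal.ofReal (S.K t g g') ^ (1/p)) (ENNReal.ofReal |u g' - u g|),
          mul_assoc, ← ENNReal.rpow_add _ _ h0 ENNReal.ofReal_ne_top]
        rw [show 1/p + 1/q = 1 by rw [one_div, one_div]; exact (by simpa using hpq.inv_add_inv_eq_inv),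
          ENNReal.rpow_one, mul_comm]
    calc (∫⁻ g', ENNReal.ofReal (S.K t g g') * ENNReal.ofReal |u g' - u g|)
        = ∫⁻ g', ((fun x => ENNReal.ofReal (S.K t g x) ^ (1/p) * ENNReal.ofReal |u x - u g|) *
            (fun x => ENNReal.ofReal (S.K t g x) ^ (1/q))) g' := by
          exact lintegral_congr hid
    _ ≤ (∫⁻ g', (ENNReal.ofReal (S.K t g g') ^ (1/p) * ENNReal.ofReal |u g' - u g|) ^ p) ^ (1/p)
          * (∫⁻ g', (ENNReal.ofReal (S.K t g g') ^ (1/q)) ^ q) ^ (1/q) :=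
        ENNReal.lintegral_mul_le_Lp_mul_Lq volume hpq
          (((hκ.pow_const _).mul hω).aemeasurable) ((hκ.pow_const _).aemeasurable)
    _ = (∫⁻ g', ENNReal.ofReal (S.K t g g') * ENNReal.ofReal |u g' - u g| ^ p) ^ (1/p) := by
      have e1 : ∀ g', (ENNReal.ofReal (S.K t g g') ^ (1/p) * ENNReal.ofReal |u g' - u g|) ^ p
          = ENNReal.ofReal (S.K t g g') * ENNReal.ofReal |u g' - u g| ^ p := by
        intro g'
        rw [ENNReal.mul_rpow_of_nonneg _ _ (by positivity : (0:ℝ) ≤ p), ← ENNReal.rpow_mul,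
          one_div_mul_cancel hp0, ENNReal.rpow_one]
      have e2 : ∀ g', (ENNReal.ofReal (S.K t g g') ^ (1/q)) ^ q = ENNReal.ofReal (S.K t g g') := by
        intro g'
        rw [← ENNReal.rpow_mul, one_div_mul_cancel hq0.ne', ENNReal.rpow_one]
      rw [lintegral_congr e1, lintegral_congr e2, S.K_lintegral_one ht g,
        ENNReal.one_rpow, mul_one]

lemma heat_sub_le (S : GrushinSetting m k α) {p : ℝ} (hp : 1 ≤ p) {t : ℝ} (ht : 0 < t)
    {u : GPoint m k → ℝ} (hu : Measurable u) (g : GPoint m k) :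
    ENNReal.ofReal |S.heat t u g - u g| ≤ S.HpF p u t g ^ (1/p) := by
  have hHp : S.HpF p u t g =
      ∫⁻ g', ENNReal.ofReal (S.K t g g') * ENNReal.ofReal |u g' - u g| ^ p := by
    apply lintegral_congr fun g' => ?_
    rw [ENNReal.ofReal_mul (S.K_nonneg t g g' ht),
      ENNReal.ofReal_rpow_of_nonneg (abs_nonneg _) (by linarith : (0:ℝ) ≤ p)]
  rw [hHp]
  exact (S.heat_sub_le_one ht hu g).trans (S.jensen_aux hp ht hu g)

lemma fracL_pointwise (S : GrushinSetting m k α) {s p : ℝ} (hs0 : 0 < s) (hs1 : s < 1)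
    (hp : 1 ≤ p) {u : GPoint m k → ℝ} (hu : Measurable u) (g : GPoint m k) :
    ENNReal.ofReal |S.fracL s u g| ≤ ENNReal.ofReal (s / Real.Gamma (1 - s)) *
      ∫⁻ t in Set.Ioi (0:ℝ), ENNReal.ofReal (t ^ (-s-1)) * S.HpF p u t g ^ (1/p) := by
  have hΓ : 0 < Real.Gamma (1 - s) := Real.Gamma_pos_of_pos (by linarith)
  have hc : 0 ≤ s / Real.Gamma (1 - s) := by positivity
  rw [fracL, abs_mul, abs_neg, abs_of_nonneg hc, ENNReal.ofReal_mul hc]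
  apply mul_le_mul_right
  rw [← Real.enorm_eq_ofReal_abs]
  calc (‖∫ t in Set.Ioi (0:ℝ), t ^ (-s-1) * (S.heat t u g - u g)‖₊ : ℝ≥0∞)
      ≤ ∫⁻ t in Set.Ioi (0:ℝ), (‖t ^ (-s-1) * (S.heat t u g - u g)‖₊ : ℝ≥0∞) :=
        enorm_integral_le_lintegral_enorm _
  _ ≤ ∫⁻ t in Set.Ioi (0:ℝ), ENNReal.ofReal (t ^ (-s-1)) * S.HpF p u t g ^ (1/p) := by
      apply lintegral_mono_ae
      refine (ae_restrict_iff' measurableSet_Ioi).2 (Filter.Eventually.of_forall fun t ht => ?_)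
      rw [← enorm_eq_nnnorm, Real.enorm_eq_ofReal_abs, abs_mul, abs_of_nonneg
        (Real.rpow_nonneg (le_of_lt ht) _), ENNReal.ofReal_mul
        (Real.rpow_nonneg (le_of_lt ht) _)]
      exact mul_le_mul_right (S.heat_sub_le hp ht hu g) _

end GrushinSetting
namespace GrushinSetting

variable {m k : ℕ} {α : ℝ}

lemma exists_block_small (S : GrushinSetting m k α) {t : ℝ} (ht0 : 0 < t) (ht1 : t ≤ 1) :
    ∃ j : ℕ, S.Mc ^ (-1 - (j:ℝ)) < t ∧ t ≤ S.Mc ^ (-(j:ℝ)) := by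
  have hM1 := S.Mc_one_lt
  have hM0 := S.Mc_pos
  have hrw : ∀ n : ℕ, S.Mc ^ (-(n:ℝ)) = (S.Mc⁻¹) ^ n := by
    intro n
    rw [Real.rpow_neg hM0.le, Real.rpow_natCast, inv_pow]
  have htend : Filter.Tendsto (fun n : ℕ => (S.Mc⁻¹) ^ n) Filter.atTop (nhds 0) :=
    tendsto_pow_atTop_nhds_zero_of_lt_one (by positivity) (inv_lt_one_of_one_lt₀ hM1)
  have hev : ∃ n : ℕ, S.Mc ^ (-(n:ℝ)) < t := by
    obtain ⟨n, hn⟩ := (htend.eventually_lt_const ht0).exists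
    exact ⟨n, by rw [hrw n]; exact hn⟩
  classical
  set n₀ := Nat.find hev with hn₀def
  have hn₀ : S.Mc ^ (-(n₀:ℝ)) < t := Nat.find_spec hev
  have hne : n₀ ≠ 0 := by
    intro h
    rw [h] at hn₀
    simp only [Nat.cast_zero, neg_zero, Real.rpow_zero] at hn₀
    linarith
  refine ⟨n₀ - 1, ?_, ?_⟩
  · have : ((n₀ - 1 : ℕ) : ℝ) = (n₀ : ℝ) - 1 := by
      have := Nat.one_le_iff_ne_zero.2 hne
      push_cast [Nat.cast_sub this]
      ring
    rw [this, show -1 - ((n₀:ℝ) - 1) = -(n₀:ℝ) by ring]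
    exact hn₀
  · have hlt := Nat.find_min hev (m := n₀ - 1) (by omega)
    push_neg at hlt
    exact hlt

lemma exists_block_large (S : GrushinSetting m k α) {t : ℝ} (ht1 : 1 < t) :
    ∃ j : ℕ, S.Mc ^ (j:ℝ) < t ∧ t ≤ S.Mc ^ ((j:ℝ) + 1) := by
  have hM1 := S.Mc_one_lt
  have hM0 := S.Mc_pos
  have hev : ∃ n : ℕ, t ≤ S.Mc ^ ((n:ℝ) + 1) := by
    obtain ⟨n, hn⟩ := pow_unbounded_of_one_lt t hM1
    refine ⟨n, le_trans hn.le ?_⟩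
    rw [← Real.rpow_natCast S.Mc n]
    apply Real.rpow_le_rpow_of_exponent_le hM1.le
    linarith
  classical
  set n₀ := Nat.find hev with hn₀def
  have hn₀ : t ≤ S.Mc ^ ((n₀:ℝ) + 1) := Nat.find_spec hev
  refine ⟨n₀, ?_, hn₀⟩
  rcases Nat.eq_zero_or_pos n₀ with h0 | hpos
  · rw [h0]
    simpa using ht1
  · have hlt := Nat.find_min hev (m := n₀ - 1) (by omega)
    push_neg at hlt
    have : ((n₀ - 1 : ℕ) : ℝ) + 1 = (n₀ : ℝ) := by
      push_cast [Nat.cast_sub (Nat.one_le_iff_ne_zero.2 hpos.ne')]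
      ring
    rwa [this] at hlt

/-- Small-time dyadic estimate. -/
lemma small_sum (S : GrushinSetting m k α) {p s : ℝ} (hp : 1 ≤ p) (hs0 : 0 < s)
    {u : GPoint m k → ℝ} (hu : Measurable u) (g : GPoint m k) :
    (∫⁻ t in Set.Ioc (0:ℝ) 1, ENNReal.ofReal (t ^ (-s-1)) * S.HpF p u t g ^ (1/p)) ≤
      ∑' j : ℕ, ENNReal.ofReal (S.Mc ^ ((1+s) + (j:ℝ)*s)) *
        (ENNReal.ofReal S.C0 * S.HpF p u (S.Mc ^ (2-(j:ℝ))) g) ^ (1/p) := by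
  have hM1 := S.Mc_one_lt
  have hM0 := S.Mc_pos
  set B : ℕ → Set ℝ := fun j => Set.Ioc (S.Mc ^ (-1-(j:ℝ))) (S.Mc ^ (-(j:ℝ))) with hB
  have hcover : Set.Ioc (0:ℝ) 1 ⊆ ⋃ j, B j := by
    intro t ht
    obtain ⟨j, hj1, hj2⟩ := S.exists_block_small ht.1 ht.2
    exact Set.mem_iUnion.2 ⟨j, hj1, hj2⟩
  calc (∫⁻ t in Set.Ioc (0:ℝ) 1, ENNReal.ofReal (t ^ (-s-1)) * S.HpF p u t g ^ (1/p))
      ≤ ∫⁻ t in ⋃ j, B j, ENNReal.ofReal (t ^ (-s-1)) * S.HpF p u t g ^ (1/p) :=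
        lintegral_mono' (Measure.restrict_mono hcover le_rfl) le_rfl
  _ ≤ ∑' j : ℕ, ∫⁻ t in B j, ENNReal.ofReal (t ^ (-s-1)) * S.HpF p u t g ^ (1/p) := by
      rw [← lintegral_sum_measure]
      exact lintegral_mono' Measure.restrict_iUnion_le le_rfl
  _ ≤ _ := by
      apply ENNReal.tsum_le_tsum fun j => ?_
      have ha : (0:ℝ) < S.Mc ^ (-1-(j:ℝ)) := Real.rpow_pos_of_pos hM0 _
      have hMa : S.Mc * S.Mc ^ (-1-(j:ℝ)) = S.Mc ^ (-(j:ℝ)) := by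
        nth_rewrite 1 [← Real.rpow_one S.Mc]
        rw [← Real.rpow_add hM0]
        congr 1
        ring
      have hM2a : S.Mc ^ (2:ℕ) * S.Mc ^ (-1-(j:ℝ)) = S.Mc ^ (1-(j:ℝ)) := by
        rw [← Real.rpow_natCast S.Mc 2, ← Real.rpow_add hM0]
        congr 1
        push_cast
        ring
      have hM3a : S.Mc ^ (3:ℕ) * S.Mc ^ (-1-(j:ℝ)) = S.Mc ^ (2-(j:ℝ)) := by
        rw [← Real.rpow_natCast S.Mc 3, ← Real.rpow_add hM0]
        congr 1
        push_cast
        ring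
      have hbound : ∀ t ∈ B j, ENNReal.ofReal (t ^ (-s-1)) * S.HpF p u t g ^ (1/p) ≤
          ENNReal.ofReal ((S.Mc ^ (-1-(j:ℝ))) ^ (-s-1)) *
            (ENNReal.ofReal S.C0 * S.HpF p u (S.Mc ^ (2-(j:ℝ))) g) ^ (1/p) := by
        intro t htB
        apply mul_le_mul'
        · apply ENNReal.ofReal_le_ofReal
          exact Real.rpow_le_rpow_of_nonpos ha htB.1.le (by linarith)
        · apply ENNReal.rpow_le_rpow _ (by positivity)
          apply S.HpF_compare (by linarith) hu ha htB.1 (hMa ▸ htB.2)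
          · rw [hM2a]
            exact Real.rpow_lt_rpow_left_iff hM1 |>.2 (by linarith)
          · rw [hM3a]
      calc (∫⁻ t in B j, ENNReal.ofReal (t ^ (-s-1)) * S.HpF p u t g ^ (1/p))
          ≤ ∫⁻ _ in B j, ENNReal.ofReal ((S.Mc ^ (-1-(j:ℝ))) ^ (-s-1)) *
              (ENNReal.ofReal S.C0 * S.HpF p u (S.Mc ^ (2-(j:ℝ))) g) ^ (1/p) := by
            apply lintegral_mono_ae
            exact (ae_restrict_iff' measurableSet_Ioc).2 (Filter.Eventually.of_forall hbound)
      _ = ENNReal.ofReal ((S.Mc ^ (-1-(j:ℝ))) ^ (-s-1)) *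
              (ENNReal.ofReal S.C0 * S.HpF p u (S.Mc ^ (2-(j:ℝ))) g) ^ (1/p) * volume (B j) := by
            rw [setLIntegral_const]
      _ ≤ ENNReal.ofReal ((S.Mc ^ (-1-(j:ℝ))) ^ (-s-1)) *
              (ENNReal.ofReal S.C0 * S.HpF p u (S.Mc ^ (2-(j:ℝ))) g) ^ (1/p) *
              ENNReal.ofReal (S.Mc ^ (-(j:ℝ))) := by
            apply mul_le_mul_right
            rw [hB]
            simp only [Real.volume_Ioc]
            exact ENNReal.ofReal_le_ofReal (by linarith [ha])
      _ = _ := by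
            rw [mul_comm _ (ENNReal.ofReal (S.Mc ^ (-(j:ℝ)))), ← mul_assoc,
              ← ENNReal.ofReal_mul (by positivity)]
            congr 2
            rw [← Real.rpow_mul hM0.le, ← Real.rpow_add hM0]
            congr 1
            ring
  
/-- Large-time dyadic estimate. -/
lemma large_sum (S : GrushinSetting m k α) {p s : ℝ} (hp : 1 ≤ p) (hs0 : 0 < s)
    {u : GPoint m k → ℝ} (hu : Measurable u) (g : GPoint m k) :
    (∫⁻ t in Set.Ioi (1:ℝ), ENNReal.ofReal (t ^ (-s-1)) * S.HpF p u t g ^ (1/p)) ≤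
      ∑' j : ℕ, ENNReal.ofReal (S.Mc ^ (1 - (j:ℝ)*s)) *
        (ENNReal.ofReal S.C0 * S.HpF p u (S.Mc ^ ((j:ℝ)+3)) g) ^ (1/p) := by
  have hM1 := S.Mc_one_lt
  have hM0 := S.Mc_pos
  set B : ℕ → Set ℝ := fun j => Set.Ioc (S.Mc ^ ((j:ℝ))) (S.Mc ^ ((j:ℝ)+1)) with hB
  have hcover : Set.Ioi (1:ℝ) ⊆ ⋃ j, B j := by
    intro t ht
    obtain ⟨j, hj1, hj2⟩ := S.exists_block_large ht
    exact Set.mem_iUnion.2 ⟨j, hj1, hj2⟩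
  calc (∫⁻ t in Set.Ioi (1:ℝ), ENNReal.ofReal (t ^ (-s-1)) * S.HpF p u t g ^ (1/p))
      ≤ ∫⁻ t in ⋃ j, B j, ENNReal.ofReal (t ^ (-s-1)) * S.HpF p u t g ^ (1/p) :=
        lintegral_mono' (Measure.restrict_mono hcover le_rfl) le_rfl
  _ ≤ ∑' j : ℕ, ∫⁻ t in B j, ENNReal.ofReal (t ^ (-s-1)) * S.HpF p u t g ^ (1/p) := by
      rw [← lintegral_sum_measure]
      exact lintegral_mono' Measure.restrict_iUnion_le le_rfl
  _ ≤ _ := by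
      apply ENNReal.tsum_le_tsum fun j => ?_
      have ha : (0:ℝ) < S.Mc ^ ((j:ℝ)) := Real.rpow_pos_of_pos hM0 _
      have hMa : S.Mc * S.Mc ^ ((j:ℝ)) = S.Mc ^ ((j:ℝ)+1) := by
        nth_rewrite 1 [← Real.rpow_one S.Mc]
        rw [← Real.rpow_add hM0]
        congr 1
        ring
      have hM2a : S.Mc ^ (2:ℕ) * S.Mc ^ ((j:ℝ)) = S.Mc ^ ((j:ℝ)+2) := by
        rw [← Real.rpow_natCast S.Mc 2, ← Real.rpow_add hM0]
        congr 1
        push_cast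
        ring
      have hM3a : S.Mc ^ (3:ℕ) * S.Mc ^ ((j:ℝ)) = S.Mc ^ ((j:ℝ)+3) := by
        rw [← Real.rpow_natCast S.Mc 3, ← Real.rpow_add hM0]
        congr 1
        push_cast
        ring
      have hbound : ∀ t ∈ B j, ENNReal.ofReal (t ^ (-s-1)) * S.HpF p u t g ^ (1/p) ≤
          ENNReal.ofReal ((S.Mc ^ ((j:ℝ))) ^ (-s-1)) *
            (ENNReal.ofReal S.C0 * S.HpF p u (S.Mc ^ ((j:ℝ)+3)) g) ^ (1/p) := by
        intro t htB
        apply mul_le_mul'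
        · apply ENNReal.ofReal_le_ofReal
          exact Real.rpow_le_rpow_of_nonpos ha htB.1.le (by linarith)
        · apply ENNReal.rpow_le_rpow _ (by positivity)
          apply S.HpF_compare (by linarith) hu ha htB.1 (hMa ▸ htB.2)
          · rw [hM2a]
            exact Real.rpow_lt_rpow_left_iff hM1 |>.2 (by linarith)
          · rw [hM3a]
      calc (∫⁻ t in B j, ENNReal.ofReal (t ^ (-s-1)) * S.HpF p u t g ^ (1/p))
          ≤ ∫⁻ _ in B j, ENNReal.ofReal ((S.Mc ^ ((j:ℝ))) ^ (-s-1)) *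
              (ENNReal.ofReal S.C0 * S.HpF p u (S.Mc ^ ((j:ℝ)+3)) g) ^ (1/p) := by
            apply lintegral_mono_ae
            exact (ae_restrict_iff' measurableSet_Ioc).2 (Filter.Eventually.of_forall hbound)
      _ = ENNReal.ofReal ((S.Mc ^ ((j:ℝ))) ^ (-s-1)) *
              (ENNReal.ofReal S.C0 * S.HpF p u (S.Mc ^ ((j:ℝ)+3)) g) ^ (1/p) * volume (B j) := by
            rw [setLIntegral_const]
      _ ≤ ENNReal.ofReal ((S.Mc ^ ((j:ℝ))) ^ (-s-1)) *
              (ENNReal.ofReal S.C0 * S.HpF p u (S.Mc ^ ((j:ℝ)+3)) g) ^ (1/p) *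
              ENNReal.ofReal (S.Mc ^ ((j:ℝ)+1)) := by
            apply mul_le_mul_right
            rw [hB]
            simp only [Real.volume_Ioc]
            exact ENNReal.ofReal_le_ofReal (by linarith [ha])
      _ = _ := by
            rw [mul_comm _ (ENNReal.ofReal (S.Mc ^ ((j:ℝ)+1))), ← mul_assoc,
              ← ENNReal.ofReal_mul (by positivity)]
            congr 2
            rw [← Real.rpow_mul hM0.le, ← Real.rpow_add hM0]
            congr 1
            ring

end GrushinSetting
namespace GrushinSetting

variable {m k : ℕ} {α : ℝ}

/-- Hölder's inequality for sums in `ℝ≥0∞`. -/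
lemma tsum_holder {p q : ℝ} (hpq : Real.HolderConjugate p q) (f h : ℕ → ℝ≥0∞) :
    ∑' j, f j * h j ≤ (∑' j, f j ^ p) ^ (1/p) * (∑' j, h j ^ q) ^ (1/q) := by
  have h1 : ∑' j, f j * h j = ∫⁻ j, (f * h) j ∂Measure.count := (lintegral_count _).symm
  have h2 : ∑' j, f j ^ p = ∫⁻ j, f j ^ p ∂Measure.count := (lintegral_count _).symm
  have h3 : ∑' j, h j ^ q = ∫⁻ j, h j ^ q ∂Measure.count := (lintegral_count _).symm
  rw [h1, h2, h3]
  exact ENNReal.lintegral_mul_le_Lp_mul_Lq Measure.count hpq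
    (measurable_from_top.aemeasurable) (measurable_from_top.aemeasurable)

lemma besovN_rpow (S : GrushinSetting m k α) {p q β : ℝ} (hq : 0 < q)
    (u : GPoint m k → ℝ) :
    S.besovN p q β u ^ q = ∫⁻ t in Set.Ioi (0:ℝ),
      (S.besovInner p t u) ^ (q / p) * ENNReal.ofReal (t ^ (-(β * q / 2) - 1)) := by
  rw [besovN, ← ENNReal.rpow_mul, one_div_mul_cancel hq.ne', ENNReal.rpow_one]

/-- The dyadic sums of `besovInner` at times `Mc^{2-j}` with weights `Mc^{jβp/2}`
are controlled by `besovN^p`. -/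
lemma sum_le_besovN (S : GrushinSetting m k α) {p β : ℝ} (hp0 : 0 < p) (hβ0 : 0 ≤ β)
    {u : GPoint m k → ℝ} (hu : Measurable u) :
    ∑' j : ℕ, ENNReal.ofReal (S.Mc ^ ((j:ℝ) * (β*p/2))) * S.besovInner p (S.Mc ^ (2-(j:ℝ))) u ≤
      (ENNReal.ofReal (S.Mc ^ (-2*(β*p)-1) * (S.Mc - 1)))⁻¹ * ENNReal.ofReal S.C0 *
        S.besovN p p β u ^ p := by
  have hM1 := S.Mc_one_lt
  have hM0 := S.Mc_pos
  set e : ℝ := -(β * p / 2) - 1 with he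
  set c₆ : ℝ := S.Mc ^ (-2*(β*p)-1) * (S.Mc - 1) with hc₆
  have hc₆0 : 0 < c₆ := by
    apply mul_pos (Real.rpow_pos_of_pos hM0 _)
    linarith
  set J : ℕ → Set ℝ := fun j => Set.Ioc (S.Mc ^ (3-(j:ℝ))) (S.Mc ^ (4-(j:ℝ))) with hJ
  have hdisj : Pairwise (Function.onFun Disjoint J) := by
    rw [pairwise_disjoint_on]
    intro i j hij
    rw [hJ]
    apply Set.Ioc_disjoint_Ioc.2
    have h1 : S.Mc ^ (4-(j:ℝ)) ≤ S.Mc ^ (3-(i:ℝ)) := by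
      apply Real.rpow_le_rpow_of_exponent_le hM1.le
      have : (i:ℝ) + 1 ≤ (j:ℝ) := by exact_mod_cast hij
      linarith
    exact le_trans inf_le_right (le_trans h1 le_sup_left)
  have hsub : (⋃ j, J j) ⊆ Set.Ioi (0:ℝ) := by
    intro t ht
    obtain ⟨j, hj⟩ := Set.mem_iUnion.1 ht
    exact lt_trans (Real.rpow_pos_of_pos hM0 _) hj.1
  have hmeasJ : ∀ j, MeasurableSet (J j) := fun j => measurableSet_Ioc
  -- the per-block claim
  have claim : ∀ j : ℕ, ENNReal.ofReal c₆ *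
      (ENNReal.ofReal (S.Mc ^ ((j:ℝ) * (β*p/2))) * S.besovInner p (S.Mc ^ (2-(j:ℝ))) u) ≤
      ENNReal.ofReal S.C0 * ∫⁻ t in J j,
        (S.besovInner p t u) ^ (p / p) * ENNReal.ofReal (t ^ e) := by
    intro j
    have ha : (0:ℝ) < S.Mc ^ (1-(j:ℝ)) := Real.rpow_pos_of_pos hM0 _
    have hMa : S.Mc * S.Mc ^ (1-(j:ℝ)) = S.Mc ^ (2-(j:ℝ)) := by
      nth_rewrite 1 [← Real.rpow_one S.Mc]
      rw [← Real.rpow_add hM0]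
      congr 1
      ring
    have hM2a : S.Mc ^ (2:ℕ) * S.Mc ^ (1-(j:ℝ)) = S.Mc ^ (3-(j:ℝ)) := by
      rw [← Real.rpow_natCast S.Mc 2, ← Real.rpow_add hM0]
      congr 1
      push_cast
      ring
    have hM3a : S.Mc ^ (3:ℕ) * S.Mc ^ (1-(j:ℝ)) = S.Mc ^ (4-(j:ℝ)) := by
      rw [← Real.rpow_natCast S.Mc 3, ← Real.rpow_add hM0]
      congr 1
      push_cast
      ring
    have hcomp : ∀ t ∈ J j, S.besovInner p (S.Mc ^ (2-(j:ℝ))) u ≤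
        ENNReal.ofReal S.C0 * S.besovInner p t u := by
      intro t htJ
      apply S.besovInner_compare hp0.le hu ha
      · exact Real.rpow_lt_rpow_left_iff hM1 |>.2 (by linarith)
      · rw [hMa]
      · rw [hM2a]; exact htJ.1
      · rw [hM3a]; exact htJ.2
    have hre : ∀ t : ℝ, (S.besovInner p t u) ^ (p / p) * ENNReal.ofReal (t ^ e) =
        S.besovInner p t u * ENNReal.ofReal (t ^ e) := by
      intro t
      rw [div_self hp0.ne', ENNReal.rpow_one]
    have hemeas : Measurable fun t : ℝ => ENNReal.ofReal (t ^ e) := by fun_prop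
    calc ENNReal.ofReal c₆ *
        (ENNReal.ofReal (S.Mc ^ ((j:ℝ) * (β*p/2))) * S.besovInner p (S.Mc ^ (2-(j:ℝ))) u)
        = S.besovInner p (S.Mc ^ (2-(j:ℝ))) u *
            ENNReal.ofReal ((S.Mc ^ (4-(j:ℝ))) ^ e * (S.Mc ^ (4-(j:ℝ)) - S.Mc ^ (3-(j:ℝ)))) := by
          have hfact : S.Mc ^ (4-(j:ℝ)) - S.Mc ^ (3-(j:ℝ)) = S.Mc ^ (3-(j:ℝ)) * (S.Mc - 1) := by
            rw [mul_sub, mul_one]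
            congr 1
            nth_rewrite 3 [← Real.rpow_one S.Mc]
            rw [← Real.rpow_add hM0]
            congr 1
            ring
          have hkey : (S.Mc ^ (4-(j:ℝ))) ^ e * (S.Mc ^ (4-(j:ℝ)) - S.Mc ^ (3-(j:ℝ)))
              = c₆ * S.Mc ^ ((j:ℝ) * (β*p/2)) := by
            calc (S.Mc ^ (4-(j:ℝ))) ^ e * (S.Mc ^ (4-(j:ℝ)) - S.Mc ^ (3-(j:ℝ)))
                = (S.Mc ^ ((4-(j:ℝ)) * e) * S.Mc ^ (3-(j:ℝ))) * (S.Mc - 1) := by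
                  rw [hfact, ← Real.rpow_mul hM0.le]
                  ring
            _ = S.Mc ^ ((4-(j:ℝ)) * e + (3-(j:ℝ))) * (S.Mc - 1) := by
                  rw [Real.rpow_add hM0]
            _ = S.Mc ^ ((-2*(β*p)-1) + (j:ℝ) * (β*p/2)) * (S.Mc - 1) := by
                  congr 2
                  rw [he]
                  ring
            _ = c₆ * S.Mc ^ ((j:ℝ) * (β*p/2)) := by
                  rw [Real.rpow_add hM0, hc₆]
                  ring
          rw [← mul_assoc, ← ENNReal.ofReal_mul hc₆0.le, ← hkey,
            mul_comm (ENNReal.ofReal ((S.Mc ^ (4-(j:ℝ))) ^ e *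
              (S.Mc ^ (4-(j:ℝ)) - S.Mc ^ (3-(j:ℝ))))) (S.besovInner p (S.Mc ^ (2-(j:ℝ))) u)]
    _ ≤ S.besovInner p (S.Mc ^ (2-(j:ℝ))) u * ∫⁻ t in J j, ENNReal.ofReal (t ^ e) := by
          apply mul_le_mul_right
          have : ∀ t ∈ J j, ENNReal.ofReal ((S.Mc ^ (4-(j:ℝ))) ^ e) ≤ ENNReal.ofReal (t ^ e) := by
            intro t htJ
            apply ENNReal.ofReal_le_ofReal
            apply Real.rpow_le_rpow_of_nonpos (lt_trans (Real.rpow_pos_of_pos hM0 _) htJ.1)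
              htJ.2
            rw [he]
            nlinarith [mul_nonneg hβ0 hp0.le]
          calc ENNReal.ofReal ((S.Mc ^ (4-(j:ℝ))) ^ e * (S.Mc ^ (4-(j:ℝ)) - S.Mc ^ (3-(j:ℝ))))
              = ENNReal.ofReal ((S.Mc ^ (4-(j:ℝ))) ^ e) * volume (J j) := by
                rw [hJ, Real.volume_Ioc, ← ENNReal.ofReal_mul (Real.rpow_nonneg
                  (Real.rpow_pos_of_pos hM0 _).le _)]
          _ = ∫⁻ _ in J j, ENNReal.ofReal ((S.Mc ^ (4-(j:ℝ))) ^ e) := by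
                rw [setLIntegral_const]
          _ ≤ ∫⁻ t in J j, ENNReal.ofReal (t ^ e) := by
                apply lintegral_mono_ae
                exact (ae_restrict_iff' (hmeasJ j)).2 (Filter.Eventually.of_forall this)
    _ = ∫⁻ t in J j, S.besovInner p (S.Mc ^ (2-(j:ℝ))) u * ENNReal.ofReal (t ^ e) := by
          rw [lintegral_const_mul'' _ (hemeas.aemeasurable.restrict)]
    _ ≤ ∫⁻ t in J j, ENNReal.ofReal S.C0 * ((S.besovInner p t u) ^ (p / p) *
          ENNReal.ofReal (t ^ e)) := by
          apply lintegral_mono_ae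
          refine (ae_restrict_iff' (hmeasJ j)).2 (Filter.Eventually.of_forall fun t htJ => ?_)
          rw [hre t, ← mul_assoc]
          exact mul_le_mul_left (hcomp t htJ) _
    _ ≤ ENNReal.ofReal S.C0 * ∫⁻ t in J j,
          (S.besovInner p t u) ^ (p / p) * ENNReal.ofReal (t ^ e) := by
          -- reverse of lintegral_const_mul_le via multiplying by the inverse
          have h0 : (ENNReal.ofReal S.C0) ≠ 0 := by
            simp only [ne_eq, ENNReal.ofReal_eq_zero, not_le]
            exact S.C0_pos
          have hC0top : (ENNReal.ofReal S.C0) ≠ ⊤ := ENNReal.ofReal_ne_top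
          have := lintegral_const_mul_le (μ := volume.restrict (J j))
            (ENNReal.ofReal S.C0)⁻¹
            (fun t => ENNReal.ofReal S.C0 * ((S.besovInner p t u) ^ (p / p) *
              ENNReal.ofReal (t ^ e)))
          have heq : ∀ t : ℝ, (ENNReal.ofReal S.C0)⁻¹ * (ENNReal.ofReal S.C0 *
              ((S.besovInner p t u) ^ (p / p) * ENNReal.ofReal (t ^ e))) =
              (S.besovInner p t u) ^ (p / p) * ENNReal.ofReal (t ^ e) := by
            intro t
            rw [← mul_assoc, ENNReal.inv_mul_cancel h0 hC0top, one_mul]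
          rw [lintegral_congr heq] at this
          calc (∫⁻ t in J j, ENNReal.ofReal S.C0 * ((S.besovInner p t u) ^ (p / p) *
              ENNReal.ofReal (t ^ e)))
              = ENNReal.ofReal S.C0 * ((ENNReal.ofReal S.C0)⁻¹ *
                ∫⁻ t in J j, ENNReal.ofReal S.C0 * ((S.besovInner p t u) ^ (p / p) *
                  ENNReal.ofReal (t ^ e))) := by
                rw [← mul_assoc, ENNReal.mul_inv_cancel h0 hC0top, one_mul]
          _ ≤ ENNReal.ofReal S.C0 * ∫⁻ t in J j,
                (S.besovInner p t u) ^ (p / p) * ENNReal.ofReal (t ^ e) :=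
              mul_le_mul_right this _
  -- summing up
  have hc₆ne : ENNReal.ofReal c₆ ≠ 0 := by
    simp only [ne_eq, ENNReal.ofReal_eq_zero, not_le]
    exact hc₆0
  calc ∑' j : ℕ, ENNReal.ofReal (S.Mc ^ ((j:ℝ) * (β*p/2))) * S.besovInner p (S.Mc ^ (2-(j:ℝ))) u
      = ∑' j : ℕ, (ENNReal.ofReal c₆)⁻¹ * (ENNReal.ofReal c₆ *
          (ENNReal.ofReal (S.Mc ^ ((j:ℝ) * (β*p/2))) * S.besovInner p (S.Mc ^ (2-(j:ℝ))) u)) := by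
        congr 1
        funext j
        rw [← mul_assoc, ENNReal.inv_mul_cancel hc₆ne ENNReal.ofReal_ne_top, one_mul]
  _ ≤ ∑' j : ℕ, (ENNReal.ofReal c₆)⁻¹ * (ENNReal.ofReal S.C0 * ∫⁻ t in J j,
        (S.besovInner p t u) ^ (p / p) * ENNReal.ofReal (t ^ e)) := by
        apply ENNReal.tsum_le_tsum fun j => mul_le_mul_right (claim j) _
  _ = (ENNReal.ofReal c₆)⁻¹ * ENNReal.ofReal S.C0 * ∑' j : ℕ, ∫⁻ t in J j,
        (S.besovInner p t u) ^ (p / p) * ENNReal.ofReal (t ^ e) := by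
        rw [ENNReal.tsum_mul_left, ENNReal.tsum_mul_left, ← mul_assoc]
  _ ≤ (ENNReal.ofReal c₆)⁻¹ * ENNReal.ofReal S.C0 * S.besovN p p β u ^ p := by
        apply mul_le_mul_right
        rw [S.besovN_rpow hp0 u, ← he]
        calc ∑' j : ℕ, ∫⁻ t in J j, (S.besovInner p t u) ^ (p / p) * ENNReal.ofReal (t ^ e)
            = ∫⁻ t, (S.besovInner p t u) ^ (p / p) * ENNReal.ofReal (t ^ e)
                ∂(Measure.sum fun j => volume.restrict (J j)) :=
              (lintegral_sum_measure _ _).symm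
        _ = ∫⁻ t in ⋃ j, J j, (S.besovInner p t u) ^ (p / p) * ENNReal.ofReal (t ^ e) := by
              rw [Measure.restrict_iUnion hdisj hmeasJ]
        _ ≤ ∫⁻ t in Set.Ioi (0:ℝ), (S.besovInner p t u) ^ (p / p) * ENNReal.ofReal (t ^ e) :=
              lintegral_mono' (Measure.restrict_mono hsub le_rfl) le_rfl
  
end GrushinSetting
namespace GrushinSetting

variable {m k : ℕ} {α : ℝ}

lemma tsum_weight_holder {M p q : ℝ} (hM : 1 < M) (hpq : Real.HolderConjugate p q)
    (r σ : ℝ) (x : ℕ → ℝ≥0∞) :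
    ∑' j : ℕ, ENNReal.ofReal (M ^ ((j:ℝ) * (r + σ))) * x j ^ (1/p) ≤
      ((1 - ENNReal.ofReal (M ^ (r * q)))⁻¹) ^ (1/q) *
        (∑' j : ℕ, ENNReal.ofReal (M ^ ((j:ℝ) * (σ * p))) * x j) ^ (1/p) := by
  have hM0 : (0:ℝ) < M := lt_trans one_pos hM
  have hp0 : 0 < p := hpq.pos
  have hq0 : 0 < q := hpq.symm.pos
  have pow_aux : ∀ (a : ℝ) (j : ℕ), ENNReal.ofReal (M ^ ((j:ℝ) * a)) =
      ENNReal.ofReal (M ^ a) ^ j := by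
    intro a j
    rw [← ENNReal.ofReal_pow (Real.rpow_nonneg hM0.le _), ← Real.rpow_natCast (M ^ a) j,
      ← Real.rpow_mul hM0.le, mul_comm]
  set f : ℕ → ℝ≥0∞ := fun j => ENNReal.ofReal (M ^ ((j:ℝ) * r)) with hf
  set h : ℕ → ℝ≥0∞ := fun j => ENNReal.ofReal (M ^ ((j:ℝ) * σ)) * x j ^ (1/p) with hh
  have eq1 : ∀ j : ℕ, ENNReal.ofReal (M ^ ((j:ℝ) * (r + σ))) * x j ^ (1/p) = f j * h j := by
    intro j
    rw [hf, hh]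
    simp only
    rw [← mul_assoc, ← ENNReal.ofReal_mul (Real.rpow_nonneg hM0.le _), ← Real.rpow_add hM0]
    congr 2
    ring
  rw [tsum_congr eq1]
  refine le_trans (tsum_holder hpq.symm f h) ?_
  have eqf : (∑' j, f j ^ q) = (1 - ENNReal.ofReal (M ^ (r * q)))⁻¹ := by
    have : ∀ j : ℕ, f j ^ q = ENNReal.ofReal (M ^ (r * q)) ^ j := by
      intro j
      rw [hf]
      simp only
      rw [ENNReal.ofReal_rpow_of_nonneg (Real.rpow_nonneg hM0.le _) hq0.le,
        ← Real.rpow_mul hM0.le, show (j:ℝ) * r * q = (j:ℝ) * (r * q) by ring, pow_aux]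
    rw [tsum_congr this, ENNReal.tsum_geometric]
  have eqh : (∑' j, h j ^ p) = ∑' j : ℕ, ENNReal.ofReal (M ^ ((j:ℝ) * (σ * p))) * x j := by
    apply tsum_congr fun j => ?_
    rw [hh]
    simp only
    rw [ENNReal.mul_rpow_of_nonneg _ _ hp0.le,
      ENNReal.ofReal_rpow_of_nonneg (Real.rpow_nonneg hM0.le _) hp0.le,
      ← Real.rpow_mul hM0.le, show (j:ℝ) * σ * p = (j:ℝ) * (σ * p) by ring,
      ← ENNReal.rpow_mul, one_div_mul_cancel hp0.ne', ENNReal.rpow_one]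
  rw [eqf, eqh]

/-- finiteness of the geometric factor -/
lemma geom_factor_ne_top {M c : ℝ} (hM : 1 < M) (hc : c < 0) :
    ((1 - ENNReal.ofReal (M ^ c))⁻¹ : ℝ≥0∞) ≠ ⊤ := by
  have h1 : M ^ c < 1 := Real.rpow_lt_one_of_one_lt_of_neg hM hc
  have h2 : ENNReal.ofReal (M ^ c) < 1 := by
    rw [← ENNReal.ofReal_one]
    exact ENNReal.ofReal_lt_ofReal_iff_of_nonneg (Real.rpow_nonneg (by linarith) _) |>.2 h1
  rw [ENNReal.inv_ne_top]
  intro h0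
  rw [tsub_eq_zero_iff_le] at h0
  exact absurd h0 (not_le.2 h2)

/-- the geometric series itself -/
lemma geom_sum_ne_top {M c : ℝ} (hM : 1 < M) (hc : c < 0) :
    (∑' j : ℕ, ENNReal.ofReal (M ^ ((j:ℝ) * c))) ≠ ⊤ := by
  have hM0 : (0:ℝ) < M := lt_trans one_pos hM
  have : ∀ j : ℕ, ENNReal.ofReal (M ^ ((j:ℝ) * c)) = ENNReal.ofReal (M ^ c) ^ j := by
    intro j
    rw [← ENNReal.ofReal_pow (Real.rpow_nonneg hM0.le _), ← Real.rpow_natCast (M ^ c) j,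
      ← Real.rpow_mul hM0.le, mul_comm]
  rw [tsum_congr this, ENNReal.tsum_geometric]
  exact geom_factor_ne_top hM hc

/-- dyadic sums of `HpF` -/
def dySum (S : GrushinSetting m k α) (p w : ℝ) (τ : ℕ → ℝ) (u : GPoint m k → ℝ)
    (g : GPoint m k) : ℝ≥0∞ :=
  ∑' j : ℕ, ENNReal.ofReal (S.Mc ^ ((j:ℝ) * w)) * S.HpF p u (τ j) g

lemma dySum_meas (S : GrushinSetting m k α) (p w : ℝ) (τ : ℕ → ℝ) {u : GPoint m k → ℝ}
    (hu : Measurable u) : Measurable (fun g => S.dySum p w τ u g) :=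
  Measurable.ennreal_tsum fun j => measurable_const.mul (S.HpF_meas p hu (τ j))

lemma lintegral_dySum (S : GrushinSetting m k α) (p w : ℝ) (τ : ℕ → ℝ) {u : GPoint m k → ℝ}
    (hu : Measurable u) :
    (∫⁻ g, S.dySum p w τ u g) =
      ∑' j : ℕ, ENNReal.ofReal (S.Mc ^ ((j:ℝ) * w)) * S.besovInner p (τ j) u := by
  simp only [dySum]
  rw [lintegral_tsum (f := fun (j : ℕ) g => ENNReal.ofReal (S.Mc ^ ((j:ℝ) * w)) * S.HpF p u (τ j) g) fun j => (measurable_const.mul (S.HpF_meas p hu (τ j))).aemeasurable]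
  exact tsum_congr fun j =>
    lintegral_const_mul'' _ (S.HpF_meas p hu (τ j)).aemeasurable

lemma lintegral_Ioi_zero_split (f : ℝ → ℝ≥0∞) :
    (∫⁻ t in Set.Ioi (0:ℝ), f t) ≤
      (∫⁻ t in Set.Ioc (0:ℝ) 1, f t) + ∫⁻ t in Set.Ioi (1:ℝ), f t := by
  rw [← Set.Ioc_union_Ioi_eq_Ioi (zero_le_one (α := ℝ))]
  calc (∫⁻ t in Set.Ioc (0:ℝ) 1 ∪ Set.Ioi 1, f t)
      ≤ ∫⁻ t, f t ∂(volume.restrict (Set.Ioc (0:ℝ) 1) + volume.restrict (Set.Ioi (1:ℝ))) :=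
        lintegral_mono' (Measure.restrict_union_le _ _) le_rfl
  _ = _ := lintegral_add_measure _ _ _

lemma ennreal_add_rpow_le (a b : ℝ≥0∞) {p : ℝ} (hp : 0 ≤ p) :
    (a + b) ^ p ≤ 2 ^ p * (a ^ p + b ^ p) := by
  rcases le_total a b with hab | hab
  · calc (a + b) ^ p ≤ (2 * b) ^ p := by
          apply ENNReal.rpow_le_rpow _ hp
          rw [two_mul]
          exact add_le_add_left hab _
    _ = 2 ^ p * b ^ p := ENNReal.mul_rpow_of_nonneg _ _ hp
    _ ≤ 2 ^ p * (a ^ p + b ^ p) := mul_le_mul_right le_add_self _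
  · calc (a + b) ^ p ≤ (2 * a) ^ p := by
          apply ENNReal.rpow_le_rpow _ hp
          rw [two_mul]
          exact add_le_add_right hab _
    _ = 2 ^ p * a ^ p := ENNReal.mul_rpow_of_nonneg _ _ hp
    _ ≤ 2 ^ p * (a ^ p + b ^ p) := mul_le_mul_right le_self_add _

end GrushinSetting
namespace GrushinSetting

variable {m k : ℕ} {α : ℝ}

lemma coeff_split (S : GrushinSetting m k α) (c w : ℝ) (y : ℕ → ℝ≥0∞) :
    ∑' j : ℕ, ENNReal.ofReal (S.Mc ^ (c + (j:ℝ) * w)) * y j =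
      ENNReal.ofReal (S.Mc ^ c) * ∑' j : ℕ, ENNReal.ofReal (S.Mc ^ ((j:ℝ) * w)) * y j := by
  rw [← ENNReal.tsum_mul_left]
  apply tsum_congr fun j => ?_
  rw [← mul_assoc, ← ENNReal.ofReal_mul (Real.rpow_nonneg S.Mc_pos.le _),
    ← Real.rpow_add S.Mc_pos]

/-- The branch-dependent pointwise reduction: the `t`-integral of
`t^{-s-1} (e^{-tL}|u-u(g)|^p(g))^{1/p}` is bounded by two dyadic sums. -/
lemma pointwise_reduction (S : GrushinSetting m k α) {s p β : ℝ} (hs0 : 0 < s) (hs1 : s < 1)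
    (hp : 1 ≤ p) (hβ2s : 2*s ≤ β) (hcase : p = 1 ∨ (1 < p ∧ 2*s < β)) :
    ∃ σ ρ : ℝ, ∃ A₁ A₂ : ℝ≥0∞, A₁ ≠ ⊤ ∧ A₂ ≠ ⊤ ∧ σ * p ≤ β * p / 2 ∧ ρ < 0 ∧
      ∀ u : GPoint m k → ℝ, Measurable u → ∀ g : GPoint m k,
        (∫⁻ t in Set.Ioi (0:ℝ), ENNReal.ofReal (t ^ (-s-1)) * S.HpF p u t g ^ (1/p)) ≤
          A₁ * (S.dySum p (σ*p) (fun j => S.Mc ^ (2-(j:ℝ))) u g) ^ (1/p) +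
          A₂ * (S.dySum p (ρ*p) (fun j => S.Mc ^ ((j:ℝ)+3)) u g) ^ (1/p) := by
  have hM1 := S.Mc_one_lt
  have hM0 := S.Mc_pos
  have hp0 : 0 < p := lt_of_lt_of_le one_pos hp
  rcases hcase with hp1 | ⟨hp1, hβs⟩
  · -- p = 1
    subst hp1
    refine ⟨s, -s, ENNReal.ofReal (S.Mc ^ (1+s)) * ENNReal.ofReal S.C0,
      ENNReal.ofReal S.Mc * ENNReal.ofReal S.C0,
      ENNReal.mul_ne_top ENNReal.ofReal_ne_top ENNReal.ofReal_ne_top,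
      ENNReal.mul_ne_top ENNReal.ofReal_ne_top ENNReal.ofReal_ne_top,
      by linarith, by linarith, ?_⟩
    intro u hu g
    have h11 : (1:ℝ)/1 = 1 := by norm_num
    calc (∫⁻ t in Set.Ioi (0:ℝ), ENNReal.ofReal (t ^ (-s-1)) * S.HpF 1 u t g ^ ((1:ℝ)/1))
        ≤ (∫⁻ t in Set.Ioc (0:ℝ) 1, ENNReal.ofReal (t ^ (-s-1)) * S.HpF 1 u t g ^ ((1:ℝ)/1))
          + ∫⁻ t in Set.Ioi (1:ℝ), ENNReal.ofReal (t ^ (-s-1)) * S.HpF 1 u t g ^ ((1:ℝ)/1) :=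
          lintegral_Ioi_zero_split _
    _ ≤ (∑' j : ℕ, ENNReal.ofReal (S.Mc ^ ((1+s) + (j:ℝ)*s)) *
            (ENNReal.ofReal S.C0 * S.HpF 1 u (S.Mc ^ (2-(j:ℝ))) g) ^ ((1:ℝ)/1))
          + ∑' j : ℕ, ENNReal.ofReal (S.Mc ^ (1 - (j:ℝ)*s)) *
            (ENNReal.ofReal S.C0 * S.HpF 1 u (S.Mc ^ ((j:ℝ)+3)) g) ^ ((1:ℝ)/1) :=
          add_le_add (S.small_sum le_rfl hs0 hu g) (S.large_sum le_rfl hs0 hu g)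
    _ = (ENNReal.ofReal (S.Mc ^ (1+s)) * ENNReal.ofReal S.C0) *
            (S.dySum 1 (s*1) (fun j => S.Mc ^ (2-(j:ℝ))) u g) ^ ((1:ℝ)/1)
          + (ENNReal.ofReal S.Mc * ENNReal.ofReal S.C0) *
            (S.dySum 1 (-s*1) (fun j => S.Mc ^ ((j:ℝ)+3)) u g) ^ ((1:ℝ)/1) := by
          rw [h11]
          simp only [ENNReal.rpow_one, dySum]
          congr 1
          · rw [← ENNReal.tsum_mul_left]
            apply tsum_congr fun j => ?_
            rw [show S.Mc ^ ((1+s) + (j:ℝ)*s) = S.Mc ^ (1+s) * S.Mc ^ ((j:ℝ)*(s*1)) from by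
              rw [← Real.rpow_add S.Mc_pos]; congr 1; ring]
            rw [ENNReal.ofReal_mul (Real.rpow_nonneg S.Mc_pos.le _)]
            ring
          · have : ∀ j : ℕ, ENNReal.ofReal (S.Mc ^ (1 - (j:ℝ)*s)) =
                ENNReal.ofReal (S.Mc ^ (1 + (j:ℝ)*(-s))) := by
              intro j
              congr 1
              ring_nf
            rw [← ENNReal.tsum_mul_left]
            apply tsum_congr fun j => ?_
            rw [show S.Mc ^ (1 - (j:ℝ)*s) = S.Mc ^ (1:ℝ) * S.Mc ^ ((j:ℝ)*(-s*1)) from by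
              rw [← Real.rpow_add S.Mc_pos]; congr 1; ring]
            rw [ENNReal.ofReal_mul (Real.rpow_nonneg S.Mc_pos.le _), Real.rpow_one]
            ring
  · -- p > 1
    have hq := Real.HolderConjugate.conjExponent hp1
    set q := Real.conjExponent p with hqdef
    have hq0 : 0 < q := hq.symm.pos
    set r : ℝ := -((β - 2*s)/4) with hr
    set σ : ℝ := s + (β - 2*s)/4 with hσdef
    have hrneg : r < 0 := by rw [hr]; linarith
    have hrσ : r + σ = s := by rw [hr, hσdef]; ring
    have hσβ : σ * p ≤ β * p / 2 := by
      have : σ ≤ β / 2 := by rw [hσdef]; linarith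
      calc σ * p ≤ (β/2) * p := mul_le_mul_of_nonneg_right this hp0.le
      _ = β * p / 2 := by ring
    set ρ : ℝ := -s/2 with hρdef
    have hρneg : ρ < 0 := by rw [hρdef]; linarith
    have hρρ : ρ + ρ = -s := by rw [hρdef]; ring
    set Gσ : ℝ≥0∞ := ((1 - ENNReal.ofReal (S.Mc ^ (r * q)))⁻¹) ^ (1/q) with hGσ
    set Gρ : ℝ≥0∞ := ((1 - ENNReal.ofReal (S.Mc ^ (ρ * q)))⁻¹) ^ (1/q) with hGρ
    have hGσtop : Gσ ≠ ⊤ := ENNReal.rpow_ne_top_of_nonneg (by positivity)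
      (geom_factor_ne_top hM1 (by nlinarith : r * q < 0))
    have hGρtop : Gρ ≠ ⊤ := ENNReal.rpow_ne_top_of_nonneg (by positivity)
      (geom_factor_ne_top hM1 (by nlinarith : ρ * q < 0))
    refine ⟨σ, ρ, ENNReal.ofReal (S.Mc ^ (1+s)) * ENNReal.ofReal S.C0 ^ (1/p) * Gσ,
      ENNReal.ofReal S.Mc * ENNReal.ofReal S.C0 ^ (1/p) * Gρ,
      ENNReal.mul_ne_top (ENNReal.mul_ne_top ENNReal.ofReal_ne_top
        (ENNReal.rpow_ne_top_of_nonneg (by positivity) ENNReal.ofReal_ne_top)) hGσtop,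
      ENNReal.mul_ne_top (ENNReal.mul_ne_top ENNReal.ofReal_ne_top
        (ENNReal.rpow_ne_top_of_nonneg (by positivity) ENNReal.ofReal_ne_top)) hGρtop,
      hσβ, hρneg, ?_⟩
    intro u hu g
    have hsplit1 : ∀ (c : ℝ) (w : ℝ) (y : ℕ → ℝ≥0∞),
        (∑' j : ℕ, ENNReal.ofReal (S.Mc ^ (c + (j:ℝ)*w)) *
          (ENNReal.ofReal S.C0 * y j) ^ (1/p)) =
        ENNReal.ofReal (S.Mc ^ c) * ENNReal.ofReal S.C0 ^ (1/p) *
          ∑' j : ℕ, ENNReal.ofReal (S.Mc ^ ((j:ℝ)*w)) * y j ^ (1/p) := by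
      intro c w y
      rw [← ENNReal.tsum_mul_left]
      apply tsum_congr fun j => ?_
      rw [show S.Mc ^ (c + (j:ℝ)*w) = S.Mc ^ c * S.Mc ^ ((j:ℝ)*w) from
          Real.rpow_add hM0 _ _,
        ENNReal.ofReal_mul (Real.rpow_nonneg hM0.le _),
        ENNReal.mul_rpow_of_nonneg _ _ (by positivity : (0:ℝ) ≤ 1/p)]
      ring
    calc (∫⁻ t in Set.Ioi (0:ℝ), ENNReal.ofReal (t ^ (-s-1)) * S.HpF p u t g ^ (1/p))
        ≤ (∫⁻ t in Set.Ioc (0:ℝ) 1, ENNReal.ofReal (t ^ (-s-1)) * S.HpF p u t g ^ (1/p))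
          + ∫⁻ t in Set.Ioi (1:ℝ), ENNReal.ofReal (t ^ (-s-1)) * S.HpF p u t g ^ (1/p) :=
          lintegral_Ioi_zero_split _
    _ ≤ (∑' j : ℕ, ENNReal.ofReal (S.Mc ^ ((1+s) + (j:ℝ)*s)) *
            (ENNReal.ofReal S.C0 * S.HpF p u (S.Mc ^ (2-(j:ℝ))) g) ^ (1/p))
          + ∑' j : ℕ, ENNReal.ofReal (S.Mc ^ (1 - (j:ℝ)*s)) *
            (ENNReal.ofReal S.C0 * S.HpF p u (S.Mc ^ ((j:ℝ)+3)) g) ^ (1/p) :=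
          add_le_add (S.small_sum hp1.le hs0 hu g) (S.large_sum hp1.le hs0 hu g)
    _ = (ENNReal.ofReal (S.Mc ^ (1+s)) * ENNReal.ofReal S.C0 ^ (1/p) *
            ∑' j : ℕ, ENNReal.ofReal (S.Mc ^ ((j:ℝ)*(r+σ))) *
              (S.HpF p u (S.Mc ^ (2-(j:ℝ))) g) ^ (1/p))
          + ENNReal.ofReal S.Mc * ENNReal.ofReal S.C0 ^ (1/p) *
            ∑' j : ℕ, ENNReal.ofReal (S.Mc ^ ((j:ℝ)*(ρ+ρ))) *
              (S.HpF p u (S.Mc ^ ((j:ℝ)+3)) g) ^ (1/p) := by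
          congr 1
          · rw [hsplit1 (1+s) s (fun j => S.HpF p u (S.Mc ^ (2-(j:ℝ))) g)]
            rw [hrσ]
          · have : ∀ j : ℕ, ENNReal.ofReal (S.Mc ^ (1 - (j:ℝ)*s)) =
                ENNReal.ofReal (S.Mc ^ (1 + (j:ℝ)*(-s))) := by
              intro j; congr 1; ring_nf
            rw [tsum_congr fun j => by rw [this j]]
            rw [hsplit1 1 (-s) (fun j => S.HpF p u (S.Mc ^ ((j:ℝ)+3)) g), Real.rpow_one, hρρ]
    _ ≤ (ENNReal.ofReal (S.Mc ^ (1+s)) * ENNReal.ofReal S.C0 ^ (1/p) *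
            (Gσ * (∑' j : ℕ, ENNReal.ofReal (S.Mc ^ ((j:ℝ)*(σ*p))) *
              S.HpF p u (S.Mc ^ (2-(j:ℝ))) g) ^ (1/p)))
          + ENNReal.ofReal S.Mc * ENNReal.ofReal S.C0 ^ (1/p) *
            (Gρ * (∑' j : ℕ, ENNReal.ofReal (S.Mc ^ ((j:ℝ)*(ρ*p))) *
              S.HpF p u (S.Mc ^ ((j:ℝ)+3)) g) ^ (1/p)) := by
          apply add_le_add
          · exact mul_le_mul_right (tsum_weight_holder hM1 hq r σ _) _
          · exact mul_le_mul_right (tsum_weight_holder hM1 hq ρ ρ _) _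
    _ = _ := by
          rw [dySum, dySum]
          ring

end GrushinSetting
namespace GrushinSetting

variable {m k : ℕ} {α : ℝ}

lemma master (S : GrushinSetting m k α) {s : ℝ} (hs0 : 0 < s) (hs1 : s < 1)
    {p β : ℝ} (hp : 1 ≤ p) (hβ2s : 2*s ≤ β) (hcase : p = 1 ∨ (1 < p ∧ 2*s < β)) :
    ∃ C : ℝ, 0 < C ∧ ∀ u : GPoint m k → ℝ, S.MemBesov p p β u →
      eLpNorm (S.fracL s u) (ENNReal.ofReal p) volume ≤
        ENNReal.ofReal C * (eLpNorm u (ENNReal.ofReal p) volume + S.besovN p p β u) := by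
  have hM1 := S.Mc_one_lt
  have hM0 := S.Mc_pos
  have hp0 : 0 < p := lt_of_lt_of_le one_pos hp
  have hβ0 : 0 ≤ β := by linarith
  obtain ⟨σ, ρ, A₁, A₂, hA₁, hA₂, hσ, hρ, hpoint⟩ :=
    S.pointwise_reduction hs0 hs1 hp hβ2s hcase
  set τS : ℕ → ℝ := fun j => S.Mc ^ (2-(j:ℝ)) with hτS
  set τL : ℕ → ℝ := fun j => S.Mc ^ ((j:ℝ)+3) with hτL
  set c₁ : ℝ≥0∞ := ENNReal.ofReal (s / Real.Gamma (1-s)) with hc₁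
  set Ggeo : ℝ≥0∞ := ∑' j : ℕ, ENNReal.ofReal (S.Mc ^ ((j:ℝ)*(ρ*p))) with hGgeo
  have hGgeotop : Ggeo ≠ ⊤ := geom_sum_ne_top hM1 (mul_neg_of_neg_of_pos hρ hp0)
  set c₆inv : ℝ≥0∞ := (ENNReal.ofReal (S.Mc ^ (-2*(β*p)-1) * (S.Mc - 1)))⁻¹ with hc₆inv
  have hc₆invtop : c₆inv ≠ ⊤ := by
    rw [hc₆inv, ENNReal.inv_ne_top]
    simp only [ne_eq, ENNReal.ofReal_eq_zero, not_le]
    apply mul_pos (Real.rpow_pos_of_pos hM0 _)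
    linarith
  have h2top : ((2:ℝ≥0∞) ^ p) ≠ ⊤ := ENNReal.rpow_ne_top_of_nonneg hp0.le (by norm_num)
  set D₁ : ℝ≥0∞ := c₁^p * 2^p * A₁^p * (c₆inv * ENNReal.ofReal S.C0) with hD₁
  set D₂ : ℝ≥0∞ := c₁^p * 2^p * A₂^p * (Ggeo * (ENNReal.ofReal (2^p) * 2)) with hD₂
  have hD₁top : D₁ ≠ ⊤ := by
    rw [hD₁]
    apply ENNReal.mul_ne_top
    apply ENNReal.mul_ne_top
    apply ENNReal.mul_ne_top
    · exact ENNReal.rpow_ne_top_of_nonneg hp0.le ENNReal.ofReal_ne_top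
    · exact h2top
    · exact ENNReal.rpow_ne_top_of_nonneg hp0.le hA₁
    · exact ENNReal.mul_ne_top hc₆invtop ENNReal.ofReal_ne_top
  have hD₂top : D₂ ≠ ⊤ := by
    rw [hD₂]
    apply ENNReal.mul_ne_top
    apply ENNReal.mul_ne_top
    apply ENNReal.mul_ne_top
    · exact ENNReal.rpow_ne_top_of_nonneg hp0.le ENNReal.ofReal_ne_top
    · exact h2top
    · exact ENNReal.rpow_ne_top_of_nonneg hp0.le hA₂
    · exact ENNReal.mul_ne_top hGgeotop
        (ENNReal.mul_ne_top ENNReal.ofReal_ne_top (by norm_num))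
  set E : ℝ≥0∞ := D₁ ^ (1/p) + D₂ ^ (1/p) with hE
  have hEtop : E ≠ ⊤ := by
    rw [hE]
    exact ENNReal.add_ne_top.2 ⟨ENNReal.rpow_ne_top_of_nonneg (by positivity) hD₁top,
      ENNReal.rpow_ne_top_of_nonneg (by positivity) hD₂top⟩
  refine ⟨E.toReal + 1, by positivity, ?_⟩
  intro u hu
  -- replace u by a measurable representative
  have hmem := hu.1
  set v : GPoint m k → ℝ := hmem.aestronglyMeasurable.mk u with hv
  have hvmeas : Measurable v := hmem.aestronglyMeasurable.stronglyMeasurable_mk.measurable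
  have huv : u =ᵐ[volume] v := hmem.aestronglyMeasurable.ae_eq_mk
  have hheat : ∀ t g, S.heat t u g = S.heat t v g := fun t g =>
    integral_congr_ae (huv.mono fun g' hg' => by dsimp only; rw [hg'])
  have hfrac : S.fracL s u =ᵐ[volume] S.fracL s v := by
    filter_upwards [huv] with g hg
    simp only [fracL]
    congr 1
    have : (fun t => t ^ (-s-1) * (S.heat t u g - u g)) =
        fun t => t ^ (-s-1) * (S.heat t v g - v g) := by
      funext t
      rw [hheat t g, hg]
    rw [this]
  have hBI : ∀ t, S.besovInner p t u = S.besovInner p t v := by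
    intro t
    apply lintegral_congr_ae
    filter_upwards [huv] with g hg
    apply lintegral_congr_ae
    filter_upwards [huv] with g' hg'
    rw [hg, hg']
  have hN : S.besovN p p β u = S.besovN p p β v := by
    rw [besovN, besovN]
    congr 1
    exact lintegral_congr fun t => by rw [hBI t]
  rw [eLpNorm_congr_ae hfrac, eLpNorm_congr_ae huv, hN]
  -- main estimate for the measurable function v
  set N : ℝ≥0∞ := S.besovN p p β v with hNv
  set Up : ℝ≥0∞ := ∫⁻ g, ENNReal.ofReal (|v g| ^ p) with hUpv
  have hPne : (ENNReal.ofReal p) ≠ 0 := by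
    simp only [ne_eq, ENNReal.ofReal_eq_zero, not_le]; exact hp0
  have hPtop : (ENNReal.ofReal p) ≠ ⊤ := ENNReal.ofReal_ne_top
  have htoReal : (ENNReal.ofReal p).toReal = p := ENNReal.toReal_ofReal hp0.le
  have hUp_eq : Up ^ (1/p) = eLpNorm v (ENNReal.ofReal p) volume := by
    rw [eLpNorm_eq_lintegral_rpow_enorm_toReal hPne hPtop, htoReal]
    congr 1
    apply lintegral_congr fun g => ?_
    rw [Real.enorm_eq_ofReal_abs, ENNReal.ofReal_rpow_of_nonneg (abs_nonneg _) hp0.le]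
  set X₁ : GPoint m k → ℝ≥0∞ := fun g => S.dySum p (σ*p) τS v g with hX₁
  set X₂ : GPoint m k → ℝ≥0∞ := fun g => S.dySum p (ρ*p) τL v g with hX₂
  have hX₁meas : Measurable X₁ := S.dySum_meas p (σ*p) τS hvmeas
  have hX₂meas : Measurable X₂ := S.dySum_meas p (ρ*p) τL hvmeas
  -- pointwise bound
  have hptw : ∀ g, (‖S.fracL s v g‖₊ : ℝ≥0∞) ^ p ≤
      c₁^p * 2^p * (A₁^p * X₁ g + A₂^p * X₂ g) := by
    intro g
    have h1 : (‖S.fracL s v g‖₊ : ℝ≥0∞) ≤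
        c₁ * (A₁ * X₁ g ^ (1/p) + A₂ * X₂ g ^ (1/p)) := by
      rw [← enorm_eq_nnnorm, Real.enorm_eq_ofReal_abs]
      exact le_trans (S.fracL_pointwise hs0 hs1 hp hvmeas g)
        (mul_le_mul_right (hpoint v hvmeas g) _)
    calc (‖S.fracL s v g‖₊ : ℝ≥0∞) ^ p
        ≤ (c₁ * (A₁ * X₁ g ^ (1/p) + A₂ * X₂ g ^ (1/p))) ^ p :=
          ENNReal.rpow_le_rpow h1 hp0.le
    _ = c₁^p * (A₁ * X₁ g ^ (1/p) + A₂ * X₂ g ^ (1/p)) ^ p :=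
          ENNReal.mul_rpow_of_nonneg _ _ hp0.le
    _ ≤ c₁^p * (2^p * ((A₁ * X₁ g ^ (1/p))^p + (A₂ * X₂ g ^ (1/p))^p)) :=
          mul_le_mul_right (ennreal_add_rpow_le _ _ hp0.le) _
    _ = c₁^p * 2^p * (A₁^p * X₁ g + A₂^p * X₂ g) := by
          rw [ENNReal.mul_rpow_of_nonneg A₁ _ hp0.le, ENNReal.mul_rpow_of_nonneg A₂ _ hp0.le,
            ← ENNReal.rpow_mul, ← ENNReal.rpow_mul, one_div_mul_cancel hp0.ne',
            ENNReal.rpow_one, ENNReal.rpow_one, mul_assoc]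
  -- integrated bound
  have hX₁int : (∫⁻ g, X₁ g) ≤ c₆inv * ENNReal.ofReal S.C0 * N ^ p := by
    rw [hX₁]
    rw [S.lintegral_dySum p (σ*p) τS hvmeas]
    calc ∑' j : ℕ, ENNReal.ofReal (S.Mc ^ ((j:ℝ) * (σ*p))) * S.besovInner p (τS j) v
        ≤ ∑' j : ℕ, ENNReal.ofReal (S.Mc ^ ((j:ℝ) * (β*p/2))) * S.besovInner p (τS j) v := by
          apply ENNReal.tsum_le_tsum fun j => ?_
          apply mul_le_mul_left
          apply ENNReal.ofReal_le_ofReal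
          apply Real.rpow_le_rpow_of_exponent_le hM1.le
          exact mul_le_mul_of_nonneg_left hσ (Nat.cast_nonneg j)
    _ ≤ _ := S.sum_le_besovN hp0 hβ0 hvmeas
  have hX₂int : (∫⁻ g, X₂ g) ≤ Ggeo * (ENNReal.ofReal (2^p) * (2 * Up)) := by
    rw [hX₂]
    rw [S.lintegral_dySum p (ρ*p) τL hvmeas]
    calc ∑' j : ℕ, ENNReal.ofReal (S.Mc ^ ((j:ℝ) * (ρ*p))) * S.besovInner p (τL j) v
        ≤ ∑' j : ℕ, ENNReal.ofReal (S.Mc ^ ((j:ℝ) * (ρ*p))) *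
            (ENNReal.ofReal (2^p) * (2 * Up)) := by
          apply ENNReal.tsum_le_tsum fun j => ?_
          exact mul_le_mul_right
            (S.besovInner_le_norm hp0.le (Real.rpow_pos_of_pos hM0 _) hvmeas) _
    _ = Ggeo * (ENNReal.ofReal (2^p) * (2 * Up)) := ENNReal.tsum_mul_right
  have hmain : (∫⁻ g, (‖S.fracL s v g‖₊ : ℝ≥0∞) ^ p) ≤ D₁ * N^p + D₂ * Up := by
    calc (∫⁻ g, (‖S.fracL s v g‖₊ : ℝ≥0∞) ^ p)
        ≤ ∫⁻ g, c₁^p * 2^p * (A₁^p * X₁ g + A₂^p * X₂ g) := lintegral_mono hptw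
    _ = c₁^p * 2^p * ∫⁻ g, (A₁^p * X₁ g + A₂^p * X₂ g) :=
        lintegral_const_mul _ ((hX₁meas.const_mul _).add (hX₂meas.const_mul _))
    _ = c₁^p * 2^p * (A₁^p * (∫⁻ g, X₁ g) + A₂^p * (∫⁻ g, X₂ g)) := by
        congr 1
        rw [lintegral_add_left (hX₁meas.const_mul _)]
        rw [lintegral_const_mul _ hX₁meas, lintegral_const_mul _ hX₂meas]
    _ ≤ c₁^p * 2^p * (A₁^p * (c₆inv * ENNReal.ofReal S.C0 * N ^ p)
          + A₂^p * (Ggeo * (ENNReal.ofReal (2^p) * (2 * Up)))) := by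
        apply mul_le_mul_right
        exact add_le_add (mul_le_mul_right hX₁int (A₁^p)) (mul_le_mul_right hX₂int (A₂^p))
    _ = D₁ * N^p + D₂ * Up := by
        rw [hD₁, hD₂]
        ring
  have h1p : (0:ℝ) ≤ 1/p := by positivity
  have hfinal : eLpNorm (S.fracL s v) (ENNReal.ofReal p) volume ≤
      E * (eLpNorm v (ENNReal.ofReal p) volume + N) := by
    rw [eLpNorm_eq_lintegral_rpow_enorm_toReal hPne hPtop, htoReal]
    have hNp : (N ^ p) ^ (1/p) = N := by
      rw [← ENNReal.rpow_mul, mul_one_div_cancel hp0.ne', ENNReal.rpow_one]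
    calc (∫⁻ g, (‖S.fracL s v g‖₊ : ℝ≥0∞) ^ p) ^ (1/p)
        ≤ (D₁ * N^p + D₂ * Up) ^ (1/p) := ENNReal.rpow_le_rpow hmain h1p
    _ ≤ (D₁ * N^p) ^ (1/p) + (D₂ * Up) ^ (1/p) :=
        ENNReal.rpow_add_le_add_rpow _ _ h1p ((div_le_one hp0).2 hp)
    _ = D₁ ^ (1/p) * N + D₂ ^ (1/p) * Up ^ (1/p) := by
        rw [ENNReal.mul_rpow_of_nonneg D₁ _ h1p, ENNReal.mul_rpow_of_nonneg D₂ _ h1p, hNp]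
    _ = D₁ ^ (1/p) * N + D₂ ^ (1/p) * eLpNorm v (ENNReal.ofReal p) volume := by
        rw [hUp_eq]
    _ ≤ E * N + E * eLpNorm v (ENNReal.ofReal p) volume := by
        apply add_le_add
        · exact mul_le_mul_left le_self_add _
        · exact mul_le_mul_left le_add_self _
    _ = E * (eLpNorm v (ENNReal.ofReal p) volume + N) := by
        rw [← mul_add, add_comm N _]
  refine le_trans hfinal (mul_le_mul_left ?_ _)
  conv_lhs => rw [← ENNReal.ofReal_toReal hEtop]
  exact ENNReal.ofReal_le_ofReal (by linarith)

end GrushinSetting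

open GrushinSetting in
/-- Proposition 3.10: boundedness of `L^s` from `B^{L,β}_{p,p}(𝔾ⁿ_α)`
into `L^p(𝔾ⁿ_α)`: if `p ∈ (1,∞)` and `β > 2s`, then
`‖L^s u‖_{L^p} ≲ ‖u‖_{B^{L,β}_{p,p}}`; for `p = 1` the same holds whenever `β ≥ 2s`. -/
theorem fracL_bounded_on_besov
    {m k : ℕ} {α : ℝ} (S : GrushinSetting m k α) (s : ℝ) (hs0 : 0 < s) (hs1 : s < 1) :
    (∀ p β : ℝ, 1 < p → 2 * s < β →
      ∃ C : ℝ, 0 < C ∧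
        ∀ u : GPoint m k → ℝ, S.MemBesov p p β u →
          eLpNorm (S.fracL s u) (ENNReal.ofReal p) volume ≤
            ENNReal.ofReal C *
              (eLpNorm u (ENNReal.ofReal p) volume + S.besovN p p β u)) ∧
    (∀ β : ℝ, 2 * s ≤ β →
      ∃ C : ℝ, 0 < C ∧
        ∀ u : GPoint m k → ℝ, S.MemBesov 1 1 β u →
          eLpNorm (S.fracL s u) 1 volume ≤
            ENNReal.ofReal C * (eLpNorm u 1 volume + S.besovN 1 1 β u)) := by
  constructor
  · intro p β hp1 hβ
    exact S.master hs0 hs1 hp1.le hβ.le (Or.inr ⟨hp1, hβ⟩)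
  · intro β hβ
    obtain ⟨C, hC, h⟩ := S.master hs0 hs1 (le_refl (1:ℝ)) hβ (Or.inl rfl)
    refine ⟨C, hC, fun u hu => ?_⟩
    have := h u hu
    simpa [ENNReal.ofReal_one] using this
end
end

section
/- Let L be the Grushin-Laplace operator on 𝔾^n_α, p ∈ [1,∞) and u ∈ L^p(𝔾^n_α). Then (2/p)·liminf_{t→0⁺} t^{−p/2} ∫_{𝔾^n_α} e^{−tL}(|u−u(g)|^p)(g) dg ≤ liminf_{β→1⁻} (1−β)·N^{L,β}_{p,p}(u)^p ≤ limsup_{β→1⁻} (1−β)·N^{L,β}_{p,p}(u)^p ≤ (2/p)·limsup_{t→0⁺} t^{−p/2} ∫_{𝔾^n_α} e^{−tL}(|u−u(g)|^p)(g) dg. -/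
open MeasureTheory Real Set Filter
open scoped ENNReal NNReal

noncomputable section

private lemma abs_sub_rpow_le' {a b p : ℝ} (hp : 0 ≤ p) :
    |a - b| ^ p ≤ 2 ^ p * |a| ^ p + 2 ^ p * |b| ^ p := by
  have h1 : |a - b| ^ p ≤ (2 * max |a| |b|) ^ p := by
    apply Real.rpow_le_rpow (abs_nonneg _) _ hp
    calc |a - b| ≤ |a| + |b| := abs_sub _ _
      _ ≤ 2 * max |a| |b| := by
          rcases le_total |a| |b| with h | h
          · rw [max_eq_right h]; linarith
          · rw [max_eq_left h]; linarith
  have h2 : (2 * max |a| |b|) ^ p = 2 ^ p * (max |a| |b|) ^ p :=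
    Real.mul_rpow (by norm_num) (le_max_of_le_left (abs_nonneg _))
  have h3 : (max |a| |b|) ^ p ≤ |a| ^ p + |b| ^ p := by
    rcases le_total |a| |b| with h | h
    · rw [max_eq_right h]
      have := Real.rpow_nonneg (abs_nonneg a) p
      linarith
    · rw [max_eq_left h]
      have := Real.rpow_nonneg (abs_nonneg b) p
      linarith
  have h2pos : (0:ℝ) ≤ 2 ^ p := Real.rpow_nonneg (by norm_num) p
  calc |a - b| ^ p ≤ 2 ^ p * (max |a| |b|) ^ p := h2 ▸ h1
    _ ≤ 2 ^ p * (|a| ^ p + |b| ^ p) := by nlinarith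
    _ = 2 ^ p * |a| ^ p + 2 ^ p * |b| ^ p := by ring

private lemma lint_Ioo_rpow' {δ ε : ℝ} (hδ : 0 < δ) (hε : 0 < ε) :
    ∫⁻ t in Set.Ioo (0:ℝ) δ, ENNReal.ofReal (t ^ (ε - 1)) = ENNReal.ofReal (δ ^ ε / ε) := by
  have hInt : IntegrableOn (fun t : ℝ => t ^ (ε - 1)) (Ioo 0 δ) := by
    have := (intervalIntegral.intervalIntegrable_rpow' (a := 0) (b := δ)
      (r := ε - 1) (by linarith))
    exact ((intervalIntegrable_iff_integrableOn_Ioc_of_le hδ.le).mp this).mono_set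
      Ioo_subset_Ioc_self
  have hnn : 0 ≤ᵐ[volume.restrict (Ioo (0:ℝ) δ)] fun t : ℝ => t ^ (ε - 1) :=
    (ae_restrict_iff' measurableSet_Ioo).2 (Filter.Eventually.of_forall
      fun t ht => Real.rpow_nonneg ht.1.le _)
  rw [← ofReal_integral_eq_lintegral_ofReal hInt hnn]
  congr 1
  rw [← integral_Ioc_eq_integral_Ioo, ← intervalIntegral.integral_of_le hδ.le,
    integral_rpow (Or.inl (by linarith))]
  rw [sub_add_cancel, Real.zero_rpow hε.ne']
  ring

private lemma lint_Ici_rpow' {δ a : ℝ} (hδ : 0 < δ) (ha : a < -1) :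
    ∫⁻ t in Set.Ici δ, ENNReal.ofReal (t ^ a) = ENNReal.ofReal (δ ^ (a + 1) / (-(a + 1))) := by
  rw [← Measure.restrict_congr_set Ioi_ae_eq_Ici]
  have hInt : IntegrableOn (fun t : ℝ => t ^ a) (Ioi δ) := integrableOn_Ioi_rpow_of_lt ha hδ
  have hnn : 0 ≤ᵐ[volume.restrict (Ioi δ)] fun t : ℝ => t ^ a :=
    (ae_restrict_iff' measurableSet_Ioi).2 (Filter.Eventually.of_forall
      fun t ht => Real.rpow_nonneg (hδ.trans ht).le _)
  rw [← ofReal_integral_eq_lintegral_ofReal hInt hnn]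
  congr 1
  rw [integral_Ioi_rpow_of_lt ha hδ, div_neg, neg_div]

private lemma le_liminf_const_mul' {ι : Type*} {f : Filter ι} (u : ι → ℝ≥0∞) (a : ℝ≥0∞) :
    a * f.liminf u ≤ f.liminf (fun x => a * u x) := by
  rw [Filter.liminf_eq_iSup_iInf, Filter.liminf_eq_iSup_iInf]
  simp only [ENNReal.mul_iSup]
  refine iSup₂_mono fun s hs => ?_
  exact le_iInf₂ fun x hx => mul_le_mul_right (iInf₂_le x hx) a

private lemma tendsto_ofReal_rpow_exp {δ : ℝ} (hδ : 0 < δ) :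
    Tendsto (fun ε : ℝ => δ ^ ε) (nhdsWithin 0 (Ioi 0)) (nhds 1) := by
  have h : (fun ε : ℝ => δ ^ ε) = fun ε : ℝ => Real.exp (Real.log δ * ε) := by
    funext ε; rw [Real.rpow_def_of_pos hδ]
  rw [h]
  have : Tendsto (fun ε : ℝ => Real.exp (Real.log δ * ε)) (nhds 0) (nhds 1) := by
    have hc : Continuous (fun ε : ℝ => Real.exp (Real.log δ * ε)) :=
      Real.continuous_exp.comp (continuous_const.mul continuous_id)
    simpa using hc.tendsto 0
  exact this.mono_left nhdsWithin_le_nhds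

private lemma core_liminf' {G : ℝ → ℝ≥0∞} :
    Filter.liminf G (nhdsWithin 0 (Ioi 0)) ≤
      Filter.liminf (fun ε : ℝ =>
        ENNReal.ofReal ε * ∫⁻ t in Ioi (0:ℝ), G t * ENNReal.ofReal (t ^ (ε - 1)))
        (nhdsWithin 0 (Ioi 0)) := by
  set J := fun ε : ℝ =>
    ENNReal.ofReal ε * ∫⁻ t in Ioi (0:ℝ), G t * ENNReal.ofReal (t ^ (ε - 1)) with hJ
  by_contra h
  push_neg at h
  obtain ⟨c, hc1, hc2⟩ := exists_between h
  have hcne : c ≠ ⊤ := hc2.ne_top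
  have hev : ∀ᶠ t in nhdsWithin 0 (Ioi 0), c < G t := eventually_lt_of_lt_liminf hc2
  obtain ⟨δ, hδ, hδsub⟩ := (nhdsGT_basis_of_exists_gt ⟨1, one_pos⟩).eventually_iff.mp hev
  have key : ∀ ε : ℝ, 0 < ε → c * ENNReal.ofReal (δ ^ ε) ≤ J ε := by
    intro ε hε
    have h1 : c * ENNReal.ofReal (δ ^ ε) =
        ENNReal.ofReal ε * (c * ENNReal.ofReal (δ ^ ε / ε)) := by
      rw [← mul_assoc, mul_comm (ENNReal.ofReal ε) c, mul_assoc,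
        ← ENNReal.ofReal_mul hε.le]
      congr 2
      field_simp
    rw [h1, hJ]
    refine mul_le_mul_right ?_ _
    calc c * ENNReal.ofReal (δ ^ ε / ε)
        = ∫⁻ t in Ioo (0:ℝ) δ, c * ENNReal.ofReal (t ^ (ε - 1)) := by
          rw [lintegral_const_mul' _ _ hcne, lint_Ioo_rpow' hδ hε]
      _ ≤ ∫⁻ t in Ioo (0:ℝ) δ, G t * ENNReal.ofReal (t ^ (ε - 1)) := by
          refine lintegral_mono_ae ((ae_restrict_iff' measurableSet_Ioo).2
            (Filter.Eventually.of_forall fun t ht => ?_))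
          exact mul_le_mul_left (hδsub ht).le _
      _ ≤ ∫⁻ t in Ioi (0:ℝ), G t * ENNReal.ofReal (t ^ (ε - 1)) :=
          lintegral_mono_set Ioo_subset_Ioi_self
  have htend : Tendsto (fun ε : ℝ => c * ENNReal.ofReal (δ ^ ε))
      (nhdsWithin 0 (Ioi 0)) (nhds (c * 1)) := by
    refine ENNReal.Tendsto.const_mul ?_ (Or.inl one_ne_zero)
    have := (ENNReal.continuous_ofReal.tendsto 1).comp (tendsto_ofReal_rpow_exp hδ)
    simpa [Function.comp_def] using this
  have hliminf : c ≤ Filter.liminf J (nhdsWithin 0 (Ioi 0)) := by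
    have h1 : Filter.liminf (fun ε : ℝ => c * ENNReal.ofReal (δ ^ ε))
        (nhdsWithin 0 (Ioi 0)) = c * 1 := htend.liminf_eq
    rw [show c = c * 1 by rw [mul_one], ← h1]
    refine Filter.liminf_le_liminf ?_
    exact eventually_mem_nhdsWithin.mono fun ε hε => key ε hε
  exact absurd hliminf (not_le.mpr hc1)

private lemma core_limsup' {p : ℝ} (hp : 1 ≤ p) {M : ℝ≥0∞} (hM : M ≠ ⊤)
    {G : ℝ → ℝ≥0∞} (hGb : ∀ t : ℝ, 0 < t → G t ≤ ENNReal.ofReal (t ^ (-(p / 2))) * M) :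
    Filter.limsup (fun ε : ℝ =>
        ENNReal.ofReal ε * ∫⁻ t in Ioi (0:ℝ), G t * ENNReal.ofReal (t ^ (ε - 1)))
        (nhdsWithin 0 (Ioi 0)) ≤ Filter.limsup G (nhdsWithin 0 (Ioi 0)) := by
  set J := fun ε : ℝ =>
    ENNReal.ofReal ε * ∫⁻ t in Ioi (0:ℝ), G t * ENNReal.ofReal (t ^ (ε - 1)) with hJ
  by_contra h
  push_neg at h
  obtain ⟨c, hc1, hc2⟩ := exists_between h
  have hcne : c ≠ ⊤ := hc2.ne_top
  have hev : ∀ᶠ t in nhdsWithin 0 (Ioi 0), G t < c := eventually_lt_of_limsup_lt hc1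
  obtain ⟨δ, hδ, hδsub⟩ := (nhdsGT_basis_of_exists_gt ⟨1, one_pos⟩).eventually_iff.mp hev
  have hp2 : (0:ℝ) < p / 2 := by linarith
  set B := fun ε : ℝ => c * ENNReal.ofReal (δ ^ ε) +
    ENNReal.ofReal ε * (M * ENNReal.ofReal (δ ^ (ε - p / 2) / (p / 2 - ε))) with hB
  have key : ∀ ε ∈ Ioo (0:ℝ) (p / 2), J ε ≤ B ε := by
    rintro ε ⟨hε0, hεp⟩
    have hsplit : ∫⁻ t in Ioi (0:ℝ), G t * ENNReal.ofReal (t ^ (ε - 1)) =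
        (∫⁻ t in Ioo (0:ℝ) δ, G t * ENNReal.ofReal (t ^ (ε - 1))) +
        ∫⁻ t in Ici δ, G t * ENNReal.ofReal (t ^ (ε - 1)) := by
      rw [← Ioo_union_Ici_eq_Ioi hδ, lintegral_union measurableSet_Ici]
      exact Set.disjoint_left.mpr fun t ht ht' => absurd ht.2 (not_lt.mpr ht')
    have part1 : ∫⁻ t in Ioo (0:ℝ) δ, G t * ENNReal.ofReal (t ^ (ε - 1)) ≤
        c * ENNReal.ofReal (δ ^ ε / ε) := by
      calc ∫⁻ t in Ioo (0:ℝ) δ, G t * ENNReal.ofReal (t ^ (ε - 1))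
          ≤ ∫⁻ t in Ioo (0:ℝ) δ, c * ENNReal.ofReal (t ^ (ε - 1)) := by
            refine lintegral_mono_ae ((ae_restrict_iff' measurableSet_Ioo).2
              (Filter.Eventually.of_forall fun t ht => ?_))
            exact mul_le_mul_left (hδsub ht).le _
        _ = c * ENNReal.ofReal (δ ^ ε / ε) := by
            rw [lintegral_const_mul' _ _ hcne, lint_Ioo_rpow' hδ hε0]
    have part2 : ∫⁻ t in Ici δ, G t * ENNReal.ofReal (t ^ (ε - 1)) ≤
        M * ENNReal.ofReal (δ ^ (ε - p / 2) / (p / 2 - ε)) := by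
      calc ∫⁻ t in Ici δ, G t * ENNReal.ofReal (t ^ (ε - 1))
          ≤ ∫⁻ t in Ici δ, M * ENNReal.ofReal (t ^ (ε - 1 - p / 2)) := by
            refine lintegral_mono_ae ((ae_restrict_iff' measurableSet_Ici).2
              (Filter.Eventually.of_forall fun t ht => ?_))
            have ht0 : (0:ℝ) < t := lt_of_lt_of_le hδ ht
            calc G t * ENNReal.ofReal (t ^ (ε - 1))
                ≤ (ENNReal.ofReal (t ^ (-(p / 2))) * M) * ENNReal.ofReal (t ^ (ε - 1)) :=
                  mul_le_mul_left (hGb t ht0) _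
              _ = M * ENNReal.ofReal (t ^ (ε - 1 - p / 2)) := by
                  rw [mul_comm _ M, mul_assoc, ← ENNReal.ofReal_mul
                    (Real.rpow_nonneg ht0.le _), ← Real.rpow_add ht0]
                  congr 2
                  ring
        _ = M * ENNReal.ofReal (δ ^ (ε - p / 2) / (p / 2 - ε)) := by
            rw [lintegral_const_mul' _ _ hM, lint_Ici_rpow' hδ (by linarith)]
            congr 2 <;> ring
    calc J ε ≤ ENNReal.ofReal ε * (c * ENNReal.ofReal (δ ^ ε / ε) +
          M * ENNReal.ofReal (δ ^ (ε - p / 2) / (p / 2 - ε))) := by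
          rw [hJ]
          exact mul_le_mul_right (hsplit ▸ add_le_add part1 part2) _
      _ = B ε := by
          rw [hB, mul_add]
          congr 1
          rw [← mul_assoc, mul_comm (ENNReal.ofReal ε) c, mul_assoc,
            ← ENNReal.ofReal_mul hε0.le]
          congr 2
          field_simp
  have htendB : Tendsto B (nhdsWithin 0 (Ioi 0))
      (nhds (c * 1 + 0 * (M * ENNReal.ofReal (δ ^ (0 - p / 2) / (p / 2 - 0))))) := by
    refine Filter.Tendsto.add ?_ ?_
    · refine ENNReal.Tendsto.const_mul ?_ (Or.inl one_ne_zero)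
      have := (ENNReal.continuous_ofReal.tendsto 1).comp (tendsto_ofReal_rpow_exp hδ)
      simpa [Function.comp_def] using this
    · refine ENNReal.Tendsto.mul ?_
        (Or.inr (ENNReal.mul_ne_top hM ENNReal.ofReal_ne_top)) ?_
        (Or.inr ENNReal.zero_ne_top)
      · have := (ENNReal.continuous_ofReal.tendsto 0).comp
          (tendsto_id.mono_left (nhdsWithin_le_nhds (s := Ioi (0:ℝ))))
        simpa using this
      · refine ENNReal.Tendsto.const_mul ?_ (Or.inr hM)
        refine (ENNReal.continuous_ofReal.tendsto _).comp ?_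
        have hnum : Tendsto (fun ε : ℝ => δ ^ (ε - p / 2)) (nhds 0)
            (nhds (δ ^ (0 - p / 2 : ℝ))) := by
          have h : (fun ε : ℝ => δ ^ (ε - p / 2)) =
              fun ε : ℝ => Real.exp (Real.log δ * (ε - p / 2)) := by
            funext ε; rw [Real.rpow_def_of_pos hδ]
          rw [h, Real.rpow_def_of_pos hδ]
          have hc : Continuous (fun ε : ℝ => Real.exp (Real.log δ * (ε - p / 2))) :=
            Real.continuous_exp.comp (continuous_const.mul (continuous_id.sub continuous_const))
          simpa using hc.tendsto 0
        have hden : Tendsto (fun ε : ℝ => p / 2 - ε) (nhds 0) (nhds (p / 2 - 0)) :=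
          (continuous_const.sub continuous_id).tendsto 0
        exact (hnum.div hden (by simpa using hp2.ne')).mono_left nhdsWithin_le_nhds
  have hlimB : Filter.limsup B (nhdsWithin 0 (Ioi 0)) = c := by
    rw [htendB.limsup_eq]
    simp
  have : Filter.limsup J (nhdsWithin 0 (Ioi 0)) ≤ c := by
    rw [← hlimB]
    refine Filter.limsup_le_limsup ?_
    filter_upwards [Ioo_mem_nhdsGT_of_mem ⟨le_refl (0:ℝ), hp2⟩] with ε hε
    exact key ε hε
  exact absurd this (not_le.mpr hc2)

private lemma besovInner_le_aux {m k : ℕ} {α : ℝ} (S : GrushinSetting m k α) {p : ℝ}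
    (hp : 1 ≤ p) {u : GPoint m k → ℝ} (hu : AEMeasurable u volume) {t : ℝ} (ht : 0 < t) :
    S.besovInner p t u ≤
      2 * ENNReal.ofReal (2 ^ p) * ∫⁻ g, ENNReal.ofReal (|u g| ^ p) := by
  set C := ∫⁻ g, ENNReal.ofReal (|u g| ^ p) with hC
  have hKn : ∀ g g', 0 ≤ S.K t g g' := fun g g' => S.K_nonneg t g g' ht
  have hKm : Measurable (Function.uncurry (S.K t)) := S.K_meas t
  have hK1 : ∀ g : GPoint m k, ∫⁻ g', ENNReal.ofReal (S.K t g g') = 1 := by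
    intro g
    have hint : Integrable (fun g' => S.K t g g') volume := by
      by_contra hni
      have h0 := S.K_stochastic t g ht
      rw [MeasureTheory.integral_undef hni] at h0
      norm_num at h0
    rw [← ofReal_integral_eq_lintegral_ofReal hint
      (Filter.Eventually.of_forall (hKn g)), S.K_stochastic t g ht, ENNReal.ofReal_one]
  have hmf : Measurable (fun x : ℝ => ENNReal.ofReal (2 ^ p * |x| ^ p)) := by
    refine ENNReal.measurable_ofReal.comp (measurable_const.mul ?_)
    exact (Real.continuous_rpow_const (by linarith)).measurable.comp continuous_abs.measurable
  have hh : AEMeasurable (fun x => ENNReal.ofReal (2 ^ p * |u x| ^ p)) volume :=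
    hmf.comp_aemeasurable hu
  have hptwise : ∀ g g' : GPoint m k,
      ENNReal.ofReal (S.K t g g' * |u g' - u g| ^ p) ≤
        ENNReal.ofReal (S.K t g g') * ENNReal.ofReal (2 ^ p * |u g'| ^ p) +
        ENNReal.ofReal (S.K t g g') * ENNReal.ofReal (2 ^ p * |u g| ^ p) := by
    intro g g'
    rw [ENNReal.ofReal_mul (hKn g g'), ← mul_add]
    refine mul_le_mul_right ?_ _
    refine le_trans (ENNReal.ofReal_le_ofReal (abs_sub_rpow_le' (by linarith))) ?_
    rw [ENNReal.ofReal_add (by positivity) (by positivity)]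
  have step1 : S.besovInner p t u ≤
      ∫⁻ g, ((∫⁻ g', ENNReal.ofReal (S.K t g g') * ENNReal.ofReal (2 ^ p * |u g'| ^ p)) +
        ENNReal.ofReal (2 ^ p * |u g| ^ p)) := by
    refine lintegral_mono fun g => ?_
    calc ∫⁻ g', ENNReal.ofReal (S.K t g g' * |u g' - u g| ^ p)
        ≤ ∫⁻ g', (ENNReal.ofReal (S.K t g g') * ENNReal.ofReal (2 ^ p * |u g'| ^ p) +
            ENNReal.ofReal (S.K t g g') * ENNReal.ofReal (2 ^ p * |u g| ^ p)) :=
          lintegral_mono fun g' => hptwise g g'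
      _ = (∫⁻ g', ENNReal.ofReal (S.K t g g') * ENNReal.ofReal (2 ^ p * |u g'| ^ p)) +
          ∫⁻ g', ENNReal.ofReal (S.K t g g') * ENNReal.ofReal (2 ^ p * |u g| ^ p) := by
          refine lintegral_add_left' ?_ _
          exact (((hKm.comp measurable_prodMk_left).ennreal_ofReal).aemeasurable).mul hh
      _ = (∫⁻ g', ENNReal.ofReal (S.K t g g') * ENNReal.ofReal (2 ^ p * |u g'| ^ p)) +
          ENNReal.ofReal (2 ^ p * |u g| ^ p) := by
          rw [lintegral_mul_const' _ _ ENNReal.ofReal_ne_top, hK1 g, one_mul]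
  have hswap : ∫⁻ g, ∫⁻ g',
      ENNReal.ofReal (S.K t g g') * ENNReal.ofReal (2 ^ p * |u g'| ^ p) =
      ENNReal.ofReal (2 ^ p) * C := by
    rw [lintegral_lintegral_swap]
    · have : ∀ g' : GPoint m k,
          ∫⁻ g, ENNReal.ofReal (S.K t g g') * ENNReal.ofReal (2 ^ p * |u g'| ^ p) =
          ENNReal.ofReal (2 ^ p * |u g'| ^ p) := by
        intro g'
        rw [lintegral_mul_const' _ _ ENNReal.ofReal_ne_top]
        have : ∫⁻ g, ENNReal.ofReal (S.K t g g') = 1 := by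
          rw [show (fun g => ENNReal.ofReal (S.K t g g')) =
            fun g => ENNReal.ofReal (S.K t g' g) from funext fun g => by
              rw [S.K_symm]]
          exact hK1 g'
        rw [this, one_mul]
      rw [lintegral_congr this]
      simp_rw [fun g : GPoint m k => ENNReal.ofReal_mul (show (0:ℝ) ≤ 2 ^ p by positivity)
        (q := |u g| ^ p)]
      rw [lintegral_const_mul' _ _ ENNReal.ofReal_ne_top]
    · show AEMeasurable (fun x : GPoint m k × GPoint m k =>
          ENNReal.ofReal (S.K t x.1 x.2) * ENNReal.ofReal (2 ^ p * |u x.2| ^ p)) _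
      refine (?_ : AEMeasurable (fun x : GPoint m k × GPoint m k =>
          ENNReal.ofReal (S.K t x.1 x.2)) _).mul (?_ : AEMeasurable
          (fun x : GPoint m k × GPoint m k => ENNReal.ofReal (2 ^ p * |u x.2| ^ p)) _)
      · exact (hKm.ennreal_ofReal).aemeasurable
      · exact hh.comp_quasiMeasurePreserving
          (Measure.quasiMeasurePreserving_snd (μ := (volume : Measure (GPoint m k)))
            (ν := (volume : Measure (GPoint m k))))
  calc S.besovInner p t u ≤ _ := step1
    _ = ENNReal.ofReal (2 ^ p) * C + ENNReal.ofReal (2 ^ p) * C := by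
        rw [lintegral_add_right' _ hh, hswap]
        congr 1
        simp_rw [fun g : GPoint m k => ENNReal.ofReal_mul (show (0:ℝ) ≤ 2 ^ p by positivity)
          (q := |u g| ^ p)]
        rw [lintegral_const_mul' _ _ ENNReal.ofReal_ne_top]
    _ = 2 * ENNReal.ofReal (2 ^ p) * C := by ring

open GrushinSetting in
/-- Proposition 3.19, Bourgain–Brezis–Mironescu type bounds: for
`u ∈ L^p(𝔾ⁿ_α)`,
`(2/p) liminf_{t→0⁺} t^{-p/2} ∫ e^{-tL}(|u-u(g)|^p)(g) dg
  ≤ liminf_{β→1⁻} (1-β) N^{L,β}_{p,p}(u)^p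
  ≤ limsup_{β→1⁻} (1-β) N^{L,β}_{p,p}(u)^p
  ≤ (2/p) limsup_{t→0⁺} t^{-p/2} ∫ e^{-tL}(|u-u(g)|^p)(g) dg`. -/
theorem besov_seminorm_limit_beta_one
    {m k : ℕ} {α : ℝ} (S : GrushinSetting m k α) (p : ℝ) (hp : 1 ≤ p)
    (u : GPoint m k → ℝ) (hu : MemLp u (ENNReal.ofReal p) volume) :
    ENNReal.ofReal (2 / p) *
        Filter.liminf
          (fun t : ℝ => ENNReal.ofReal (t ^ (-(p / 2))) * S.besovInner p t u)
          (nhdsWithin 0 (Ioi 0)) ≤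
      Filter.liminf (fun β : ℝ => ENNReal.ofReal (1 - β) * (S.besovN p p β u) ^ p)
        (nhdsWithin 1 (Iio 1)) ∧
    Filter.liminf (fun β : ℝ => ENNReal.ofReal (1 - β) * (S.besovN p p β u) ^ p)
        (nhdsWithin 1 (Iio 1)) ≤
      Filter.limsup (fun β : ℝ => ENNReal.ofReal (1 - β) * (S.besovN p p β u) ^ p)
        (nhdsWithin 1 (Iio 1)) ∧
    Filter.limsup (fun β : ℝ => ENNReal.ofReal (1 - β) * (S.besovN p p β u) ^ p)
        (nhdsWithin 1 (Iio 1)) ≤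
      ENNReal.ofReal (2 / p) *
        Filter.limsup
          (fun t : ℝ => ENNReal.ofReal (t ^ (-(p / 2))) * S.besovInner p t u)
          (nhdsWithin 0 (Ioi 0)) := by
  have hp0 : (0:ℝ) < p := lt_of_lt_of_le one_pos hp
  have hum : AEMeasurable u volume := hu.1.aemeasurable
  set C := ∫⁻ g, ENNReal.ofReal (|u g| ^ p) with hCdef
  have hCfin : C ≠ ⊤ := by
    have hInt : Integrable (fun g => ‖u g‖ ^ p) volume := by
      have := hu.integrable_norm_rpow (ENNReal.ofReal_pos.2 hp0).ne' (by simp)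
      rwa [ENNReal.toReal_ofReal hp0.le] at this
    have hCeq : C = ENNReal.ofReal (∫ g, ‖u g‖ ^ p) := by
      rw [ofReal_integral_eq_lintegral_ofReal hInt
        (Filter.Eventually.of_forall fun g => by positivity), hCdef]
      simp_rw [Real.norm_eq_abs]
    rw [hCeq]
    exact ENNReal.ofReal_ne_top
  set M := 2 * ENNReal.ofReal (2 ^ p) * C with hMdef
  have hMfin : M ≠ ⊤ :=
    ENNReal.mul_ne_top (ENNReal.mul_ne_top (by simp) ENNReal.ofReal_ne_top) hCfin
  have hFb : ∀ t : ℝ, 0 < t → S.besovInner p t u ≤ M := fun t ht =>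
    besovInner_le_aux S hp hum ht
  set G := fun t : ℝ => ENNReal.ofReal (t ^ (-(p / 2))) * S.besovInner p t u with hG
  have hGb : ∀ t : ℝ, 0 < t → G t ≤ ENNReal.ofReal (t ^ (-(p / 2))) * M := fun t ht =>
    mul_le_mul_right (hFb t ht) _
  set J := fun ε : ℝ =>
    ENNReal.ofReal ε * ∫⁻ t in Ioi (0:ℝ), G t * ENNReal.ofReal (t ^ (ε - 1)) with hJ
  set εf := fun β : ℝ => (1 - β) * (p / 2) with hεf
  have hident : ∀ β ∈ Iio (1:ℝ), ENNReal.ofReal (1 - β) * (S.besovN p p β u) ^ p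
      = ENNReal.ofReal (2 / p) * J (εf β) := by
    intro β hβ
    have hβ' : (0:ℝ) < 1 - β := sub_pos.2 hβ
    have hNp : (S.besovN p p β u) ^ p =
        ∫⁻ t in Ioi (0:ℝ), S.besovInner p t u * ENNReal.ofReal (t ^ (-(β * p / 2) - 1)) := by
      rw [GrushinSetting.besovN, one_div, ENNReal.rpow_inv_rpow hp0.ne']
      simp [div_self hp0.ne']
    have hInteq : ∫⁻ t in Ioi (0:ℝ),
        S.besovInner p t u * ENNReal.ofReal (t ^ (-(β * p / 2) - 1))
        = ∫⁻ t in Ioi (0:ℝ), G t * ENNReal.ofReal (t ^ (εf β - 1)) := by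
      refine setLIntegral_congr_fun measurableSet_Ioi
        (fun t ht => ?_)
      have ht0 : (0:ℝ) < t := ht
      rw [hG, hεf]
      dsimp only
      rw [show (-(β * p / 2) - 1 : ℝ) = (-(p / 2)) + ((1 - β) * (p / 2) - 1) by ring,
        Real.rpow_add ht0, ENNReal.ofReal_mul (Real.rpow_nonneg ht0.le _)]
      ring
    rw [hNp, hInteq, hJ]
    dsimp only
    rw [← mul_assoc, ← ENNReal.ofReal_mul (by positivity : (0:ℝ) ≤ 2 / p)]
    congr 2
    rw [hεf]
    field_simp
  have hΦΨ : ∀ᶠ β in nhdsWithin 1 (Iio 1),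
      ENNReal.ofReal (1 - β) * (S.besovN p p β u) ^ p
        = ENNReal.ofReal (2 / p) * J (εf β) :=
    eventually_mem_nhdsWithin.mono fun β hβ => hident β hβ
  have hmap : Tendsto εf (nhdsWithin 1 (Iio 1)) (nhdsWithin 0 (Ioi 0)) := by
    refine tendsto_nhdsWithin_of_tendsto_nhds_of_eventually_within _ ?_ ?_
    · have hc : Continuous εf := (continuous_const.sub continuous_id).mul continuous_const
      have h1 := (hc.tendsto 1).mono_left (nhdsWithin_le_nhds (s := Iio (1:ℝ)))
      simpa [hεf] using h1
    · refine eventually_mem_nhdsWithin.mono fun β hβ => ?_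
      have hβ' : (0:ℝ) < 1 - β := sub_pos.2 hβ
      exact mul_pos hβ' (by linarith)
  have hliminf_comp :
      Filter.liminf (fun β => ENNReal.ofReal (2 / p) * J (εf β)) (nhdsWithin 1 (Iio 1))
      = Filter.liminf (fun ε => ENNReal.ofReal (2 / p) * J ε)
          (Filter.map εf (nhdsWithin 1 (Iio 1))) := by
    simp only [Filter.liminf, Filter.map_map]
    rfl
  have hlimsup_comp :
      Filter.limsup (fun β => ENNReal.ofReal (2 / p) * J (εf β)) (nhdsWithin 1 (Iio 1))
      = Filter.limsup (fun ε => ENNReal.ofReal (2 / p) * J ε)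
          (Filter.map εf (nhdsWithin 1 (Iio 1))) := by
    simp only [Filter.limsup, Filter.map_map]
    rfl
  refine ⟨?_, Filter.liminf_le_limsup, ?_⟩
  · calc ENNReal.ofReal (2 / p) * Filter.liminf G (nhdsWithin 0 (Ioi 0))
        ≤ ENNReal.ofReal (2 / p) * Filter.liminf J (nhdsWithin 0 (Ioi 0)) :=
          mul_le_mul_right core_liminf' _
      _ ≤ Filter.liminf (fun ε => ENNReal.ofReal (2 / p) * J ε) (nhdsWithin 0 (Ioi 0)) :=
          le_liminf_const_mul' _ _
      _ ≤ Filter.liminf (fun ε => ENNReal.ofReal (2 / p) * J ε)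
            (Filter.map εf (nhdsWithin 1 (Iio 1))) :=
          Filter.liminf_le_liminf_of_le hmap
      _ = Filter.liminf (fun β => ENNReal.ofReal (2 / p) * J (εf β)) (nhdsWithin 1 (Iio 1)) :=
          hliminf_comp.symm
      _ = _ := (Filter.liminf_congr hΦΨ).symm
  · calc Filter.limsup
          (fun β => ENNReal.ofReal (1 - β) * (S.besovN p p β u) ^ p) (nhdsWithin 1 (Iio 1))
        = Filter.limsup (fun β => ENNReal.ofReal (2 / p) * J (εf β)) (nhdsWithin 1 (Iio 1)) :=
          Filter.limsup_congr hΦΨ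
      _ = Filter.limsup (fun ε => ENNReal.ofReal (2 / p) * J ε)
            (Filter.map εf (nhdsWithin 1 (Iio 1))) := hlimsup_comp
      _ ≤ Filter.limsup (fun ε => ENNReal.ofReal (2 / p) * J ε) (nhdsWithin 0 (Ioi 0)) :=
          Filter.limsup_le_limsup_of_le hmap
      _ = ENNReal.ofReal (2 / p) * Filter.limsup J (nhdsWithin 0 (Ioi 0)) :=
          ENNReal.limsup_const_mul_of_ne_top ENNReal.ofReal_ne_top
      _ ≤ ENNReal.ofReal (2 / p) * Filter.limsup G (nhdsWithin 0 (Ioi 0)) :=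
          mul_le_mul_right (core_limsup' hp hMfin hGb) _
end
end
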